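/- arXiv:1807.07293 — 5 statements merged into one kernel-verified Lean document; each statement's English description precedes it below -/
import Mathlib

section
/- Let P be a finite poset with both a smallest element 0̂ and a largest element 1̂, and suppose |P| ≥ 2. Then the quotient Δ(P)/(Δ(P∖{0̂}) ∪ Δ(P∖{1̂})) is homeomorphic to the double suspension Σ²Δ(P∖{0̂,1̂}) of the order complex of the proper part of P. If P consists of a single element, this quotient is homeomorphic to the two-point space S⁰. -/
open Finset

/-- Geometric order complex `Δ(P)` of a finite poset. -/
def OC (P : Type) [PartialOrder P] [Fintype P] : Type :=
  {f : P → ℝ // (∀ x, 0 ≤ f x) ∧ (∑ x, f x) = 1 ∧ IsChain (· ≤ ·) {x | f x ≠ 0}}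

instance (P : Type) [PartialOrder P] [Fintype P] : TopologicalSpace (OC P) :=
  inferInstanceAs (TopologicalSpace {f : P → ℝ // _})

/-- Relation collapsing `A ⊆ X` to a freely added basepoint; models `X/A`. -/
def pcollapseRel (X : Type) (A : Set X) : (X ⊕ Unit) → (X ⊕ Unit) → Prop :=
  fun a b => ∃ x ∈ A, a = Sum.inl x ∧ b = Sum.inr ()

/-- The quotient space `X/A`. -/
def PCollapse (X : Type) [TopologicalSpace X] (A : Set X) : Type :=
  Quot (pcollapseRel X A)

instance (X : Type) [TopologicalSpace X] (A : Set X) : TopologicalSpace (PCollapse X A) :=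
  inferInstanceAs (TopologicalSpace (Quot _))

/-- Unreduced suspension relation (with `Σ∅ = S⁰`). -/
def suspRel (X : Type) : (X × unitInterval ⊕ Bool) → (X × unitInterval ⊕ Bool) → Prop :=
  fun a b => ∃ x t, a = Sum.inl (x, t) ∧
    ((t = 0 ∧ b = Sum.inr false) ∨ (t = 1 ∧ b = Sum.inr true))

/-- The unreduced suspension `ΣX`. -/
def Susp (X : Type) [TopologicalSpace X] : Type :=
  Quot (suspRel X)

instance (X : Type) [TopologicalSpace X] : TopologicalSpace (Susp X) :=
  inferInstanceAs (TopologicalSpace (Quot _))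

/-- `Δ̌̂(P) = Δ(P)/(Δ(P∖{b}) ∪ Δ(P∖{t}))`, the order complex of `P` with all
simplices not containing both `b` and `t` collapsed to a point. -/
def Dhat (P : Type) [PartialOrder P] [Fintype P] (b t : P) : Type :=
  PCollapse (OC P) {f : OC P | f.1 b = 0 ∨ f.1 t = 0}

instance (P : Type) [PartialOrder P] [Fintype P] (b t : P) :
    TopologicalSpace (Dhat P b t) :=
  inferInstanceAs (TopologicalSpace (PCollapse _ _))


namespace DhatAux

variable {P : Type} [PartialOrder P] [Fintype P]

lemma sum_split [DecidableEq P] (b t : P) (hbt : b ≠ t) (f : P → ℝ) :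
    ∑ x, f x = f b + f t + ∑ x : {x : P // x ≠ b ∧ x ≠ t}, f x.1 := by
  have h1 : ∑ x ∈ (Finset.univ.erase b).erase t, f x
      = ∑ x : {x : P // x ≠ b ∧ x ≠ t}, f x.1 := by
    apply Finset.sum_subtype
    intro x
    simp only [Finset.mem_erase, Finset.mem_univ, and_true]
    tauto
  rw [← Finset.add_sum_erase _ f (Finset.mem_univ b),
    ← Finset.add_sum_erase _ f (Finset.mem_erase.mpr ⟨hbt.symm, Finset.mem_univ t⟩), h1]
  ring

instance compactOC : CompactSpace (OC P) := by
  have h : IsCompact {f : P → ℝ |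
      (∀ x, 0 ≤ f x) ∧ (∑ x, f x) = 1 ∧ IsChain (· ≤ ·) {x | f x ≠ 0}} := by
    apply IsCompact.of_isClosed_subset (isCompact_stdSimplex ℝ P)
    · have hEq : {f : P → ℝ |
          (∀ x, 0 ≤ f x) ∧ (∑ x, f x) = 1 ∧ IsChain (· ≤ ·) {x | f x ≠ 0}}
          = stdSimplex ℝ P ∩
            ⋂ (x : P) (y : P), {f : P → ℝ | (x ≤ y ∨ y ≤ x ∨ x = y) ∨ f x = 0 ∨ f y = 0} := by
        ext f
        simp only [Set.mem_setOf_eq, Set.mem_inter_iff, stdSimplex, Set.mem_iInter]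
        constructor
        · rintro ⟨h1, h2, h3⟩
          refine ⟨⟨h1, h2⟩, fun x y => ?_⟩
          by_cases hx : f x = 0
          · tauto
          by_cases hy : f y = 0
          · tauto
          by_cases hxy : x = y
          · tauto
          rcases h3 hx hy hxy with h | h <;> tauto
        · rintro ⟨⟨h1, h2⟩, h3⟩
          refine ⟨h1, h2, fun x hx y hy hxy => ?_⟩
          rcases h3 x y with (h | h | h) | h | h <;> tauto
      rw [hEq]
      refine (isClosed_stdSimplex ℝ P).inter
        (isClosed_iInter fun x => isClosed_iInter fun y => ?_)
      by_cases hc : x ≤ y ∨ y ≤ x ∨ x = y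
      · have : {f : P → ℝ | (x ≤ y ∨ y ≤ x ∨ x = y) ∨ f x = 0 ∨ f y = 0} = Set.univ := by
          ext f; simp [hc]
        rw [this]; exact isClosed_univ
      · have : {f : P → ℝ | (x ≤ y ∨ y ≤ x ∨ x = y) ∨ f x = 0 ∨ f y = 0}
            = {f : P → ℝ | f x = 0} ∪ {f : P → ℝ | f y = 0} := by
          ext f; simp [hc]
        rw [this]
        exact ((isClosed_eq (continuous_apply x) continuous_const)).union
          (isClosed_eq (continuous_apply y) continuous_const)
    · intro f hf
      exact ⟨hf.1, hf.2.1⟩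
  exact isCompact_iff_compactSpace.mp h

section T2

variable (b t : P)

/-- A continuous injection from `Dhat` into `P → ℝ`, used to prove Hausdorffness. -/
noncomputable def collapseF : Dhat P b t → (P → ℝ) :=
  Quot.lift (Sum.elim (fun f => min (f.1 b) (f.1 t) • f.1) fun _ => 0)
    (by rintro x y ⟨f, hf, rfl, rfl⟩
        simp only [Sum.elim_inl, Sum.elim_inr]
        have hm : min (f.1 b) (f.1 t) = 0 := by
          refine le_antisymm ?_ (le_min (f.2.1 b) (f.2.1 t))
          rcases hf with h | h
          · calc min (f.1 b) (f.1 t) ≤ f.1 b := min_le_left _ _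
              _ = 0 := h
          · calc min (f.1 b) (f.1 t) ≤ f.1 t := min_le_right _ _
              _ = 0 := h
        simp [hm])

lemma collapseF_cont : Continuous (collapseF (P := P) b t) := by
  apply continuous_quot_lift
  apply Continuous.sumElim
  · exact (((continuous_apply b).comp continuous_subtype_val).min
      ((continuous_apply t).comp continuous_subtype_val)).smul continuous_subtype_val
  · exact continuous_const

@[simp] lemma collapseF_mk (f : OC P) :
    collapseF b t (Quot.mk _ (Sum.inl f)) = min (f.1 b) (f.1 t) • f.1 := rfl

@[simp] lemma collapseF_base :
    collapseF b t (Quot.mk _ (Sum.inr ())) = 0 := rfl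

lemma or_of_min_eq_zero (f : OC P) (hm : min (f.1 b) (f.1 t) = 0) :
    f.1 b = 0 ∨ f.1 t = 0 := by
  rcases le_total (f.1 b) (f.1 t) with h | h
  · left; rwa [min_eq_left h] at hm
  · right; rwa [min_eq_right h] at hm

lemma min_zero_of_smul (f : OC P) (h : min (f.1 b) (f.1 t) • f.1 = 0) :
    min (f.1 b) (f.1 t) = 0 := by
  by_contra hc
  have hm : 0 < min (f.1 b) (f.1 t) :=
    lt_of_le_of_ne (le_min (f.2.1 b) (f.2.1 t)) (Ne.symm hc)
  have hb : 0 < f.1 b := lt_of_lt_of_le hm (min_le_left _ _)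
  have h2 := congrFun h b
  simp only [Pi.smul_apply, smul_eq_mul, Pi.zero_apply] at h2
  nlinarith

lemma basept_of (f : OC P) (h : f.1 b = 0 ∨ f.1 t = 0) :
    (Quot.mk _ (Sum.inl f) : Dhat P b t) = Quot.mk _ (Sum.inr ()) :=
  Quot.sound ⟨f, h, rfl, rfl⟩

lemma collapseF_inj : Function.Injective (collapseF (P := P) b t) := by
  intro x y
  obtain ⟨x, rfl⟩ := Quot.exists_rep x
  obtain ⟨y, rfl⟩ := Quot.exists_rep y
  revert x y
  have hsum : ∀ f : OC P, ∑ x, (min (f.1 b) (f.1 t) • f.1) x = min (f.1 b) (f.1 t) := by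
    intro f
    simp only [Pi.smul_apply, smul_eq_mul, ← Finset.mul_sum, f.2.2.1, mul_one]
  rintro (f | u) (g | v) h
  · rw [collapseF_mk, collapseF_mk] at h
    by_cases hm : min (f.1 b) (f.1 t) = 0
    · have h0 : min (g.1 b) (g.1 t) • g.1 = 0 := by rw [← h, hm, zero_smul]
      rw [basept_of b t f (or_of_min_eq_zero b t f hm),
        basept_of b t g (or_of_min_eq_zero b t g (min_zero_of_smul b t g h0))]
    · have hmm : min (f.1 b) (f.1 t) = min (g.1 b) (g.1 t) := by
        rw [← hsum f, ← hsum g, h]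
      have hfg : f = g := by
        apply Subtype.ext; funext p
        have h2 := congrFun h p
        simp only [Pi.smul_apply, smul_eq_mul] at h2
        rw [← hmm] at h2
        exact mul_left_cancel₀ hm h2
      rw [hfg]
  · rw [collapseF_mk, collapseF_base] at h
    rw [basept_of b t f (or_of_min_eq_zero b t f (min_zero_of_smul b t f h))]
  · rw [collapseF_base, collapseF_mk] at h
    rw [basept_of b t g (or_of_min_eq_zero b t g (min_zero_of_smul b t g h.symm))]
  · rfl

instance t2Dhat : T2Space (Dhat P b t) :=
  ⟨fun _ _ h => separated_by_continuous (collapseF_cont b t)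
    fun e => h (collapseF_inj b t e)⟩

end T2

section Main

variable (P : Type) [PartialOrder P] [Fintype P] [DecidableEq P] [BoundedOrder P]
  [Nontrivial P]

abbrev PSub := {x : P // x ≠ (⊥ : P) ∧ x ≠ (⊤ : P)}

/-- bottom coordinate -/
noncomputable def fA (t u : ℝ) : ℝ := u/2 + (1-u) * max (1-2*t) 0
/-- top coordinate -/
noncomputable def fC (t u : ℝ) : ℝ := u/2 + (1-u) * max (2*t-1) 0
/-- middle scaling -/
noncomputable def fS (t u : ℝ) : ℝ := (1-u) * min (2*t) (2-2*t)

lemma fA_nonneg {t u : ℝ} (hu : u ∈ unitInterval) : 0 ≤ fA t u := by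
  have := hu.1; have := hu.2
  have h1 : (0:ℝ) ≤ max (1-2*t) 0 := le_max_right _ _
  have h2 : (0:ℝ) ≤ 1 - u := by linarith
  unfold fA; positivity

lemma fC_nonneg {t u : ℝ} (hu : u ∈ unitInterval) : 0 ≤ fC t u := by
  have := hu.1; have := hu.2
  have h1 : (0:ℝ) ≤ max (2*t-1) 0 := le_max_right _ _
  have h2 : (0:ℝ) ≤ 1 - u := by linarith
  unfold fC; positivity

lemma fS_nonneg {t u : ℝ} (ht : t ∈ unitInterval) (hu : u ∈ unitInterval) : 0 ≤ fS t u := by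
  have := hu.2; have := ht.1; have := ht.2
  have h2 : (0:ℝ) ≤ 1 - u := by linarith
  have h3 : (0:ℝ) ≤ min (2*t) (2-2*t) := le_min (by linarith) (by linarith)
  exact mul_nonneg h2 h3

lemma fACS_sum {t u : ℝ} (ht : t ∈ unitInterval) : fA t u + fC t u + fS t u = 1 := by
  unfold fA fC fS
  rcases le_total (2*t) 1 with h | h
  · rw [max_eq_left (by linarith : (0:ℝ) ≤ 1-2*t), max_eq_right (by linarith : 2*t-1 ≤ (0:ℝ)),
      min_eq_left (by linarith : 2*t ≤ 2-2*t)]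
    ring
  · rw [max_eq_right (by linarith : 1-2*t ≤ (0:ℝ)), max_eq_left (by linarith : (0:ℝ) ≤ 2*t-1),
      min_eq_right (by linarith : 2-2*t ≤ 2*t)]
    ring

/-- The join parametrization `X × I × I → Δ(P)` on the main part. -/
noncomputable def iota1 (q : (OC (PSub P) × unitInterval) × unitInterval) : OC P := by
  refine ⟨fun p => if hp : p = ⊥ then fA q.1.2 q.2
    else if hp' : p = ⊤ then fC q.1.2 q.2
    else fS q.1.2 q.2 * q.1.1.1 ⟨p, hp, hp'⟩, ?_, ?_, ?_⟩
  · intro p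
    dsimp only
    split_ifs with h1 h2
    · exact fA_nonneg q.2.2
    · exact fC_nonneg q.2.2
    · exact mul_nonneg (fS_nonneg q.1.2.2 q.2.2) (q.1.1.2.1 _)
  · rw [sum_split ⊥ ⊤ bot_ne_top]
    rw [dif_pos rfl, dif_neg (fun h => bot_ne_top (α := P) h.symm), dif_pos rfl]
    have hs : ∑ p : PSub P, (if hp : p.1 = ⊥ then fA q.1.2 q.2
        else if hp' : p.1 = ⊤ then fC q.1.2 q.2
        else fS q.1.2 q.2 * q.1.1.1 ⟨p.1, hp, hp'⟩)
        = ∑ p : PSub P, fS q.1.2 q.2 * q.1.1.1 p := by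
      refine Finset.sum_congr rfl fun p _ => ?_
      rw [dif_neg p.2.1, dif_neg p.2.2]
    rw [hs, ← Finset.mul_sum, q.1.1.2.2.1, mul_one]
    exact fACS_sum q.1.2.2
  · intro p hp q' hq' hpq
    by_cases h1 : p = ⊥
    · left; rw [h1]; exact bot_le
    by_cases h2 : p = ⊤
    · right; rw [h2]; exact le_top
    by_cases h3 : q' = ⊥
    · right; rw [h3]; exact bot_le
    by_cases h4 : q' = ⊤
    · left; rw [h4]; exact le_top
    simp only [Set.mem_setOf_eq, dif_neg h1, dif_neg h2, dif_neg h3, dif_neg h4] at hp hq'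
    have hxp : q.1.1.1 ⟨p, h1, h2⟩ ≠ 0 := fun h => hp (by rw [h, mul_zero])
    have hxq : q.1.1.1 ⟨q', h3, h4⟩ ≠ 0 := fun h => hq' (by rw [h, mul_zero])
    have hne : (⟨p, h1, h2⟩ : PSub P) ≠ ⟨q', h3, h4⟩ :=
      fun h => hpq (congrArg Subtype.val h)
    rcases q.1.1.2.2.2 hxp hxq hne with h | h
    · exact Or.inl h
    · exact Or.inr h

/-- The join parametrization on the poles of the inner suspension. -/
noncomputable def iota2 (q : Bool × unitInterval) : OC P := by
  refine ⟨fun p => if p = ⊥ then (if q.1 then (q.2:ℝ)/2 else 1 - (q.2:ℝ)/2)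
    else if p = ⊤ then (if q.1 then 1 - (q.2:ℝ)/2 else (q.2:ℝ)/2) else 0, ?_, ?_, ?_⟩
  · intro p
    have h1 := q.2.2.1; have h2 := q.2.2.2
    dsimp only
    split_ifs <;> linarith
  · obtain ⟨b, u⟩ := q
    dsimp only
    have hs : ∑ p : PSub P, (if p.1 = ⊥ then (if b then (u:ℝ)/2 else 1 - (u:ℝ)/2)
        else if p.1 = ⊤ then (if b then 1 - (u:ℝ)/2 else (u:ℝ)/2) else 0) = 0 := by
      refine Finset.sum_eq_zero fun p _ => ?_
      rw [if_neg p.2.1, if_neg p.2.2]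
    rw [sum_split ⊥ ⊤ bot_ne_top, hs,
      if_pos (rfl : (⊥:P) = ⊥),
      if_neg (show ¬(⊤:P) = ⊥ from fun h => bot_ne_top (α := P) h.symm),
      if_pos (rfl : (⊤:P) = ⊤)]
    cases b <;> simp <;> ring
  · intro p hp q' hq' hpq
    by_cases h1 : p = ⊥
    · left; rw [h1]; exact bot_le
    by_cases h2 : p = ⊤
    · right; rw [h2]; exact le_top
    exfalso
    simp only [Set.mem_setOf_eq, if_neg h1, if_neg h2] at hp
    exact hp rfl

lemma OCext {Q : Type} [PartialOrder Q] [Fintype Q] {f g : OC Q}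
    (h : ∀ p, f.1 p = g.1 p) : f = g := Subtype.ext (funext h)

lemma iota1_apply (q) (p : P) : (iota1 P q).1 p =
    if hp : p = ⊥ then fA q.1.2 q.2
    else if hp' : p = ⊤ then fC q.1.2 q.2
    else fS q.1.2 q.2 * q.1.1.1 ⟨p, hp, hp'⟩ := rfl

lemma iota1_bot (q) : (iota1 P q).1 ⊥ = fA q.1.2 q.2 := by
  rw [iota1_apply, dif_pos rfl]

lemma iota1_top (q) : (iota1 P q).1 ⊤ = fC q.1.2 q.2 := by
  rw [iota1_apply, dif_neg (fun h => bot_ne_top (α := P) h.symm), dif_pos rfl]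

lemma iota1_mem (q) (p : PSub P) :
    (iota1 P q).1 p.1 = fS q.1.2 q.2 * q.1.1.1 p := by
  rw [iota1_apply, dif_neg p.2.1, dif_neg p.2.2]

lemma iota2_apply (q) (p : P) : (iota2 P q).1 p =
    (if p = ⊥ then (if q.1 then (q.2:ℝ)/2 else 1 - (q.2:ℝ)/2)
    else if p = ⊤ then (if q.1 then 1 - (q.2:ℝ)/2 else (q.2:ℝ)/2) else 0) := rfl

lemma iota2_bot (q) : (iota2 P q).1 ⊥ = (if q.1 then (q.2:ℝ)/2 else 1 - (q.2:ℝ)/2) := by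
  rw [iota2_apply, if_pos rfl]

lemma iota2_top (q) : (iota2 P q).1 ⊤ = (if q.1 then 1 - (q.2:ℝ)/2 else (q.2:ℝ)/2) := by
  rw [iota2_apply, if_neg (fun h => bot_ne_top (α := P) h.symm), if_pos rfl]

lemma iota2_mem (q) (p : PSub P) : (iota2 P q).1 p.1 = 0 := by
  rw [iota2_apply, if_neg p.2.1, if_neg p.2.2]

lemma iota1_cont : Continuous (iota1 P) := by
  apply Continuous.subtype_mk
  apply continuous_pi
  intro p
  have ht : Continuous fun q : (OC (PSub P) × unitInterval) × unitInterval =>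
      ((q.1.2 : ℝ)) := continuous_subtype_val.comp (continuous_snd.comp continuous_fst)
  have hu : Continuous fun q : (OC (PSub P) × unitInterval) × unitInterval =>
      ((q.2 : ℝ)) := continuous_subtype_val.comp continuous_snd
  by_cases h1 : p = ⊥
  · simp only [dif_pos h1]
    unfold fA
    exact ((hu.div_const 2).add (((continuous_const.sub hu)).mul
      ((continuous_const.sub (continuous_const.mul ht)).max continuous_const)))
  by_cases h2 : p = ⊤
  · simp only [dif_neg h1, dif_pos h2]
    unfold fC
    exact ((hu.div_const 2).add (((continuous_const.sub hu)).mul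
      (((continuous_const.mul ht).sub continuous_const).max continuous_const)))
  · simp only [dif_neg h1, dif_neg h2]
    unfold fS
    have hx : Continuous fun q : (OC (PSub P) × unitInterval) × unitInterval =>
        q.1.1.1 ⟨p, h1, h2⟩ :=
      (continuous_apply _).comp (continuous_subtype_val.comp (continuous_fst.comp continuous_fst))
    exact (((continuous_const.sub hu)).mul
      ((continuous_const.mul ht).min
        (continuous_const.sub (continuous_const.mul ht)))).mul hx

lemma iota2_cont : Continuous (iota2 P) := by
  apply Continuous.subtype_mk
  apply continuous_pi
  intro p
  have hu : Continuous fun q : Bool × unitInterval => ((q.2 : ℝ)) :=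
    continuous_subtype_val.comp continuous_snd
  have hind : Continuous fun q : Bool × unitInterval => (if q.1 then (1:ℝ) else 0) :=
    (continuous_of_discreteTopology (f := fun b : Bool => if b then (1:ℝ) else 0)).comp
      continuous_fst
  have key : ∀ q : Bool × unitInterval, (if q.1 then (q.2:ℝ)/2 else 1 - (q.2:ℝ)/2)
      = (if q.1 then (1:ℝ) else 0) * ((q.2:ℝ)/2)
        + (1 - (if q.1 then (1:ℝ) else 0)) * (1 - (q.2:ℝ)/2) := by
    rintro ⟨b, u⟩; cases b <;> simp <;> ring
  have key2 : ∀ q : Bool × unitInterval, (if q.1 then 1 - (q.2:ℝ)/2 else (q.2:ℝ)/2)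
      = (if q.1 then (1:ℝ) else 0) * (1 - (q.2:ℝ)/2)
        + (1 - (if q.1 then (1:ℝ) else 0)) * ((q.2:ℝ)/2) := by
    rintro ⟨b, u⟩; cases b <;> simp <;> ring
  by_cases h1 : p = ⊥
  · simp only [if_pos h1, key]
    exact (hind.mul (hu.div_const 2)).add
      ((continuous_const.sub hind).mul (continuous_const.sub (hu.div_const 2)))
  by_cases h2 : p = ⊤
  · simp only [if_neg h1, if_pos h2, key2]
    exact (hind.mul (continuous_const.sub (hu.div_const 2))).add
      ((continuous_const.sub hind).mul (hu.div_const 2))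
  · simp only [if_neg h1, if_neg h2]
    exact continuous_const


/-- The basepoint of `Dhat`. -/
def dbase : Dhat P ⊥ ⊤ := Quot.mk _ (Sum.inr ())

/-- The cone apex `(1/2, 1/2, 0)`. -/
noncomputable def apex : OC P := iota2 P (false, 1)

noncomputable def F1 : C((OC (PSub P) × unitInterval) × unitInterval, Dhat P ⊥ ⊤) :=
  ⟨fun q => Quot.mk _ (Sum.inl (iota1 P q)),
    continuous_quot_mk.comp (continuous_inl.comp (iota1_cont P))⟩

noncomputable def F2 : C(Bool × unitInterval, Dhat P ⊥ ⊤) :=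
  ⟨fun q => Quot.mk _ (Sum.inl (iota2 P q)),
    continuous_quot_mk.comp (continuous_inl.comp (iota2_cont P))⟩

noncomputable def kap : (OC (PSub P) × unitInterval ⊕ Bool) → C(unitInterval, Dhat P ⊥ ⊤) :=
  Sum.elim ⇑(F1 P).curry (fun b => (F2 P).curry b)

lemma kap_cont : Continuous (kap P) :=
  Continuous.sumElim (F1 P).curry.continuous (F2 P).curry.continuous

lemma kap_resp : ∀ a b, suspRel (OC (PSub P)) a b → kap P a = kap P b := by
  rintro a b ⟨x, t, rfl, (⟨rfl, rfl⟩ | ⟨rfl, rfl⟩)⟩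
  · refine ContinuousMap.ext fun u => ?_
    show (F1 P).curry (x, 0) u = (F2 P).curry false u
    rw [ContinuousMap.curry_apply, ContinuousMap.curry_apply]
    show Quot.mk _ (Sum.inl (iota1 P ((x, 0), u))) = Quot.mk _ (Sum.inl (iota2 P (false, u)))
    congr 2
    refine OCext fun p => ?_
    by_cases h1 : p = ⊥
    · subst h1
      rw [iota1_bot, iota2_bot]
      simp [fA]
      ring
    by_cases h2 : p = ⊤
    · subst h2
      rw [iota1_top, iota2_top]
      simp [fC]
    · rw [iota1_apply, iota2_apply, dif_neg h1, dif_neg h2, if_neg h1, if_neg h2]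
      simp [fS]
  · refine ContinuousMap.ext fun u => ?_
    show (F1 P).curry (x, 1) u = (F2 P).curry true u
    rw [ContinuousMap.curry_apply, ContinuousMap.curry_apply]
    show Quot.mk _ (Sum.inl (iota1 P ((x, 1), u))) = Quot.mk _ (Sum.inl (iota2 P (true, u)))
    congr 2
    refine OCext fun p => ?_
    by_cases h1 : p = ⊥
    · subst h1
      rw [iota1_bot, iota2_bot]
      simp [fA]
    by_cases h2 : p = ⊤
    · subst h2
      rw [iota1_top, iota2_top]
      simp [fC]
      ring
    · rw [iota1_apply, iota2_apply, dif_neg h1, dif_neg h2, if_neg h1, if_neg h2]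
      simp [fS]

noncomputable def hSig : Susp (OC (PSub P)) → C(unitInterval, Dhat P ⊥ ⊤) :=
  Quot.lift (kap P) (kap_resp P)

lemma hSig_cont : Continuous (hSig P) := continuous_quot_lift _ (kap_cont P)

noncomputable def gMap : C(Susp (OC (PSub P)) × unitInterval, Dhat P ⊥ ⊤) :=
  ContinuousMap.uncurry ⟨hSig P, hSig_cont P⟩

noncomputable def Psi0 : (Susp (OC (PSub P)) × unitInterval ⊕ Bool) → Dhat P ⊥ ⊤ :=
  Sum.elim ⇑(gMap P) (fun b => if b then Quot.mk _ (Sum.inl (apex P)) else dbase P)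

lemma Psi0_cont : Continuous (Psi0 P) :=
  Continuous.sumElim (gMap P).continuous continuous_of_discreteTopology


lemma gMap_mk (q) (u) : gMap P (Quot.mk _ q, u) = kap P q u := rfl

lemma kap_inl (x) (t u : unitInterval) :
    kap P (Sum.inl (x, t)) u = Quot.mk _ (Sum.inl (iota1 P ((x, t), u))) := rfl

lemma kap_inr (b : Bool) (u : unitInterval) :
    kap P (Sum.inr b) u = Quot.mk _ (Sum.inl (iota2 P (b, u))) := rfl

lemma apex_bot : (apex P).1 ⊥ = 1/2 := by
  rw [apex, iota2_bot]; norm_num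

lemma apex_top : (apex P).1 ⊤ = 1/2 := by
  rw [apex, iota2_top]; norm_num

lemma apex_mem (p : PSub P) : (apex P).1 p.1 = 0 := by
  rw [apex, iota2_mem]

lemma Psi0_resp : ∀ a b, suspRel (Susp (OC (PSub P))) a b → Psi0 P a = Psi0 P b := by
  rintro a b ⟨σ, u, rfl, (⟨rfl, rfl⟩ | ⟨rfl, rfl⟩)⟩ <;>
    obtain ⟨q, rfl⟩ := Quot.exists_rep σ
  · show gMap P (Quot.mk _ q, 0) = dbase P
    rw [gMap_mk]
    rcases q with ⟨x, t⟩ | b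
    · rw [kap_inl]
      apply basept_of
      have ht0 := t.2.1; have ht1 := t.2.2
      rcases le_total (2*(t:ℝ)) 1 with h | h
      · right
        rw [iota1_top]
        unfold fC
        rw [max_eq_right (by linarith : (2*(t:ℝ)-1) ≤ 0)]
        norm_num
      · left
        rw [iota1_bot]
        unfold fA
        rw [max_eq_right (by linarith : (1-2*(t:ℝ)) ≤ 0)]
        norm_num
    · rw [kap_inr]
      apply basept_of
      cases b
      · right; rw [iota2_top]; norm_num
      · left; rw [iota2_bot]; norm_num
  · show gMap P (Quot.mk _ q, 1) = if true then Quot.mk _ (Sum.inl (apex P)) else dbase P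
    simp only [↓reduceIte]
    rw [gMap_mk]
    rcases q with ⟨x, t⟩ | b
    · rw [kap_inl]
      congr 1
      apply congrArg
      refine OCext fun p => ?_
      by_cases h1 : p = ⊥
      · subst h1; rw [iota1_bot, apex_bot]; unfold fA; norm_num
      by_cases h2 : p = ⊤
      · subst h2; rw [iota1_top, apex_top]; unfold fC; norm_num
      · rw [show p = (⟨p, h1, h2⟩ : PSub P).1 from rfl, iota1_mem, apex_mem]
        unfold fS; norm_num
    · rw [kap_inr]
      congr 1
      apply congrArg
      cases b
      · rfl
      · refine OCext fun p => ?_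
        by_cases h1 : p = ⊥
        · subst h1; rw [iota2_bot, apex_bot]; norm_num
        by_cases h2 : p = ⊤
        · subst h2; rw [iota2_top, apex_top]; norm_num
        · rw [show p = (⟨p, h1, h2⟩ : PSub P).1 from rfl, iota2_mem, apex_mem]

noncomputable def Psi : Susp (Susp (OC (PSub P))) → Dhat P ⊥ ⊤ :=
  Quot.lift (Psi0 P) (Psi0_resp P)

lemma Psi_cont : Continuous (Psi P) := continuous_quot_lift _ (Psi0_cont P)


lemma s_eq (f : OC P) : ∑ p : PSub P, f.1 p.1 = 1 - f.1 ⊥ - f.1 ⊤ := by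
  have h := sum_split ⊥ ⊤ (bot_ne_top (α := P)) f.1
  rw [f.2.2.1] at h
  linarith

lemma s_nonneg (f : OC P) : 0 ≤ 1 - f.1 ⊥ - f.1 ⊤ := by
  rw [← s_eq]
  exact Finset.sum_nonneg fun p _ => f.2.1 _

lemma min_nonneg' (f : OC P) : 0 ≤ min (f.1 ⊥) (f.1 ⊤) := le_min (f.2.1 ⊥) (f.2.1 ⊤)

/-- The inner suspension parameter. -/
noncomputable def tval (f : OC P) : ℝ :=
  if f.1 ⊤ ≤ f.1 ⊥ then (1 - f.1 ⊥ - f.1 ⊤) / (2*(1-2*f.1 ⊤))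
  else 1 - (1 - f.1 ⊥ - f.1 ⊤) / (2*(1-2*f.1 ⊥))

lemma tval_mem (f : OC P) (h : 2 * min (f.1 ⊥) (f.1 ⊤) < 1) : tval P f ∈ unitInterval := by
  have hs := s_nonneg P f
  have ha := f.2.1 ⊥
  have hc := f.2.1 ⊤
  unfold tval
  split_ifs with hle
  · rw [min_eq_right hle] at h
    have hd : 0 < 2*(1-2*f.1 ⊤) := by linarith
    constructor
    · exact div_nonneg hs (le_of_lt hd)
    · rw [div_le_one hd]; linarith
  · push_neg at hle
    rw [min_eq_left (le_of_lt hle)] at h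
    have hd : 0 < 2*(1-2*f.1 ⊥) := by linarith
    have h1 : 0 ≤ (1 - f.1 ⊥ - f.1 ⊤) / (2*(1-2*f.1 ⊥)) := div_nonneg hs (le_of_lt hd)
    have h2 : (1 - f.1 ⊥ - f.1 ⊤) / (2*(1-2*f.1 ⊥)) ≤ 1 := by
      rw [div_le_one hd]; linarith
    exact ⟨by linarith, by linarith⟩

/-- The normalized middle part. -/
noncomputable def xval (f : OC P) (hs : (1 - f.1 ⊥ - f.1 ⊤) ≠ 0) : OC (PSub P) := by
  refine ⟨fun p => f.1 p.1 / (1 - f.1 ⊥ - f.1 ⊤), fun p => div_nonneg (f.2.1 _) (s_nonneg P f),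
    ?_, ?_⟩
  · rw [← Finset.sum_div, s_eq, div_self hs]
  · intro p hp q hq hne
    have hp' : f.1 p.1 ≠ 0 := fun h => hp (by simp [Set.mem_setOf_eq, h])
    have hq' : f.1 q.1 ≠ 0 := fun h => hq (by simp [Set.mem_setOf_eq, h])
    have := f.2.2.2 hp' hq' (fun h => hne (Subtype.ext h))
    exact this

noncomputable def PhiIn (f : OC P) (h : 2 * min (f.1 ⊥) (f.1 ⊤) < 1) :
    Susp (OC (PSub P)) :=
  if hs : (1 - f.1 ⊥ - f.1 ⊤) = 0 then
    Quot.mk _ (Sum.inr (if f.1 ⊥ < f.1 ⊤ then true else false))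
  else Quot.mk _ (Sum.inl (xval P f hs, ⟨tval P f, tval_mem P f h⟩))

noncomputable def Phi1 (f : OC P) : Susp (Susp (OC (PSub P))) :=
  if h : 2 * min (f.1 ⊥) (f.1 ⊤) < 1 then
    Quot.mk _ (Sum.inl (PhiIn P f h,
      ⟨2 * min (f.1 ⊥) (f.1 ⊤), mul_nonneg (by norm_num) (min_nonneg' P f), le_of_lt h⟩))
  else Quot.mk _ (Sum.inr true)

noncomputable def Phi : Dhat P ⊥ ⊤ → Susp (Susp (OC (PSub P))) :=
  Quot.lift (Sum.elim (Phi1 P) (fun _ => Quot.mk _ (Sum.inr false)))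
    (by
      rintro x y ⟨f, hf, rfl, rfl⟩
      show Phi1 P f = Quot.mk _ (Sum.inr false)
      have hm : min (f.1 ⊥) (f.1 ⊤) = 0 := by
        refine le_antisymm ?_ (min_nonneg' P f)
        rcases hf with h | h
        · calc min (f.1 ⊥) (f.1 ⊤) ≤ f.1 ⊥ := min_le_left _ _
            _ = 0 := h
        · calc min (f.1 ⊥) (f.1 ⊤) ≤ f.1 ⊤ := min_le_right _ _
            _ = 0 := h
      have h : 2 * min (f.1 ⊥) (f.1 ⊤) < 1 := by rw [hm]; norm_num
      simp only [Phi1, h, ↓reduceDIte]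
      exact Quot.sound ⟨_, _, rfl, Or.inl ⟨Subtype.ext (by simp [hm]), rfl⟩⟩)


lemma Psi_mk_inl (σ) (u) : Psi P (Quot.mk _ (Sum.inl (σ, u))) = gMap P (σ, u) := rfl

lemma Phi_mk_inl (f) : Phi P (Quot.mk _ (Sum.inl f)) = Phi1 P f := rfl

lemma xval_apply (f : OC P) (hs) (p : PSub P) :
    (xval P f hs).1 p = f.1 p.1 / (1 - f.1 ⊥ - f.1 ⊤) := rfl

lemma supp_zero (f : OC P) (hs : 1 - f.1 ⊥ - f.1 ⊤ = 0) (p : PSub P) : f.1 p.1 = 0 := by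
  have h2 : ∑ q : PSub P, f.1 q.1 = 0 := by rw [s_eq]; exact hs
  exact (Finset.sum_eq_zero_iff_of_nonneg (fun q _ => f.2.1 _)).mp h2 p (Finset.mem_univ p)

lemma Psi_Phi (d : Dhat P ⊥ ⊤) : Psi P (Phi P d) = d := by
  obtain ⟨z, rfl⟩ := Quot.exists_rep d
  rcases z with f | u
  case inr => rfl
  rw [Phi_mk_inl]
  have ha := f.2.1 ⊥
  have hc := f.2.1 ⊤
  have hs0 := s_nonneg P f
  by_cases h : 2 * min (f.1 ⊥) (f.1 ⊤) < 1
  · simp only [Phi1, h, ↓reduceDIte]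
    rw [PhiIn]
    by_cases hs : (1 - f.1 ⊥ - f.1 ⊤) = 0
    · simp only [eq_true hs, ↓reduceDIte]
      erw [Psi_mk_inl, gMap_mk, kap_inr]
      congr 1
      apply congrArg
      refine OCext fun p => ?_
      by_cases hlt : f.1 ⊥ < f.1 ⊤
      · rw [if_pos hlt]
        by_cases h1 : p = ⊥
        · subst h1
          rw [iota2_bot, if_pos rfl]
          dsimp only
          rw [min_eq_left (le_of_lt hlt)]
          ring
        by_cases h2 : p = ⊤
        · subst h2
          rw [iota2_top, if_pos rfl]
          dsimp only
          rw [min_eq_left (le_of_lt hlt)]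
          linarith
        · rw [show p = (⟨p, h1, h2⟩ : PSub P).1 from rfl, iota2_mem]
          exact (supp_zero P f hs _).symm
      · rw [if_neg hlt]
        by_cases h1 : p = ⊥
        · subst h1
          rw [iota2_bot, if_neg Bool.false_ne_true]
          dsimp only
          rw [min_eq_right (not_lt.mp hlt)]
          linarith
        by_cases h2 : p = ⊤
        · subst h2
          rw [iota2_top, if_neg Bool.false_ne_true]
          dsimp only
          rw [min_eq_right (not_lt.mp hlt)]
          ring
        · rw [show p = (⟨p, h1, h2⟩ : PSub P).1 from rfl, iota2_mem]
          exact (supp_zero P f hs _).symm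
    · simp only [hs, ↓reduceDIte]
      erw [Psi_mk_inl, gMap_mk, kap_inl]
      have hslt : 0 < 1 - f.1 ⊥ - f.1 ⊤ := lt_of_le_of_ne hs0 (Ne.symm hs)
      congr 1
      apply congrArg
      refine OCext fun p => ?_
      by_cases h1 : p = ⊥
      · subst h1
        rw [iota1_bot]
        dsimp only
        unfold fA tval
        rcases le_or_gt (f.1 ⊤) (f.1 ⊥) with hle | hlt
        · rw [min_eq_right hle, if_pos hle]
          have h' : 2 * f.1 ⊤ < 1 := by
            have := min_eq_right hle; linarith
          have hd : (0:ℝ) < 1 - 2*f.1 ⊤ := by linarith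
          have hkey : (1 - f.1 ⊥ - f.1 ⊤) / (2*(1 - 2*f.1 ⊤)) ≤ 1/2 := by
            rw [div_le_iff₀ (by linarith)]; linarith
          rw [max_eq_left (by linarith)]
          field_simp
          ring
        · rw [min_eq_left (le_of_lt hlt), if_neg (not_le.mpr hlt)]
          have h' : 2 * f.1 ⊥ < 1 := by
            have := min_eq_left (le_of_lt hlt); linarith
          have hd : (0:ℝ) < 1 - 2*f.1 ⊥ := by linarith
          have hkey : (1 - f.1 ⊥ - f.1 ⊤) / (2*(1 - 2*f.1 ⊥)) ≤ 1/2 := by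
            rw [div_le_iff₀ (by linarith)]; linarith
          rw [max_eq_right (by linarith)]
          ring
      by_cases h2 : p = ⊤
      · subst h2
        rw [iota1_top]
        dsimp only
        unfold fC tval
        rcases le_or_gt (f.1 ⊤) (f.1 ⊥) with hle | hlt
        · rw [min_eq_right hle, if_pos hle]
          have h' : 2 * f.1 ⊤ < 1 := by
            have := min_eq_right hle; linarith
          have hd : (0:ℝ) < 1 - 2*f.1 ⊤ := by linarith
          have hkey : (1 - f.1 ⊥ - f.1 ⊤) / (2*(1 - 2*f.1 ⊤)) ≤ 1/2 := by
            rw [div_le_iff₀ (by linarith)]; linarith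
          rw [max_eq_right (by linarith)]
          ring
        · rw [min_eq_left (le_of_lt hlt), if_neg (not_le.mpr hlt)]
          have h' : 2 * f.1 ⊥ < 1 := by
            have := min_eq_left (le_of_lt hlt); linarith
          have hd : (0:ℝ) < 1 - 2*f.1 ⊥ := by linarith
          have hkey : (1 - f.1 ⊥ - f.1 ⊤) / (2*(1 - 2*f.1 ⊥)) ≤ 1/2 := by
            rw [div_le_iff₀ (by linarith)]; linarith
          rw [max_eq_left (by linarith)]
          field_simp
          ring
      · rw [show p = (⟨p, h1, h2⟩ : PSub P).1 from rfl, iota1_mem, xval_apply]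
        dsimp only
        have hfs : fS (tval P f) (2 * min (f.1 ⊥) (f.1 ⊤)) = 1 - f.1 ⊥ - f.1 ⊤ := by
          unfold fS tval
          rcases le_or_gt (f.1 ⊤) (f.1 ⊥) with hle | hlt
          · rw [min_eq_right hle, if_pos hle]
            have h' : 2 * f.1 ⊤ < 1 := by
              have := min_eq_right hle; linarith
            have hd : (0:ℝ) < 1 - 2*f.1 ⊤ := by linarith
            have hkey : (1 - f.1 ⊥ - f.1 ⊤) / (2*(1 - 2*f.1 ⊤)) ≤ 1/2 := by
              rw [div_le_iff₀ (by linarith)]; linarith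
            rw [min_eq_left (by linarith)]
            field_simp
          · rw [min_eq_left (le_of_lt hlt), if_neg (not_le.mpr hlt)]
            have h' : 2 * f.1 ⊥ < 1 := by
              have := min_eq_left (le_of_lt hlt); linarith
            have hd : (0:ℝ) < 1 - 2*f.1 ⊥ := by linarith
            have hkey : (1 - f.1 ⊥ - f.1 ⊤) / (2*(1 - 2*f.1 ⊥)) ≤ 1/2 := by
              rw [div_le_iff₀ (by linarith)]; linarith
            rw [min_eq_right (by linarith)]
            field_simp
            ring
        rw [hfs, mul_comm, div_mul_cancel₀ _ hs]
  · simp only [Phi1, h, ↓reduceDIte]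
    push_neg at h
    have hminb := min_le_left (f.1 ⊥) (f.1 ⊤)
    have hmint := min_le_right (f.1 ⊥) (f.1 ⊤)
    have hab : f.1 ⊥ = 1/2 := by linarith
    have hat : f.1 ⊤ = 1/2 := by linarith
    show Quot.mk _ (Sum.inl (apex P)) = _
    congr 1
    apply congrArg
    refine OCext fun p => ?_
    by_cases h1 : p = ⊥
    · subst h1; rw [apex_bot, hab]
    by_cases h2 : p = ⊤
    · subst h2; rw [apex_top, hat]
    · rw [show p = (⟨p, h1, h2⟩ : PSub P).1 from rfl, apex_mem]
      exact (supp_zero P f (by linarith) _).symm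


lemma min_fA_fC {t u : ℝ} (ht : t ∈ unitInterval) (hu : u ∈ unitInterval) :
    min (fA t u) (fC t u) = u/2 := by
  have h1u : (0:ℝ) ≤ 1 - u := by linarith [hu.2]
  unfold fA fC
  rcases le_total (2*t) 1 with h | h
  · rw [max_eq_right (show 2*t-1 ≤ (0:ℝ) by linarith), mul_zero, add_zero,
      min_eq_right (le_add_of_nonneg_right (mul_nonneg h1u (le_max_right _ _)))]
  · rw [max_eq_right (show 1-2*t ≤ (0:ℝ) by linarith), mul_zero, add_zero,
      min_eq_left (le_add_of_nonneg_right (mul_nonneg h1u (le_max_right _ _)))]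

lemma susp_mk_congr {X : Type} [TopologicalSpace X] {a c : X} {b d : unitInterval}
    (h1 : a = c) (h2 : (b:ℝ) = (d:ℝ)) :
    (Quot.mk (suspRel X) (Sum.inl (a, b))) = Quot.mk _ (Sum.inl (c, d)) := by
  rw [h1, Subtype.ext h2]

lemma Phi_Psi (σ : Susp (Susp (OC (PSub P)))) : Phi P (Psi P σ) = σ := by
  obtain ⟨z, rfl⟩ := Quot.exists_rep σ
  rcases z with ⟨σ1, u⟩ | b
  case inr =>
    cases b
    · rfl
    · show Phi1 P (apex P) = _
      have hna : ¬ (2 * min ((apex P).1 ⊥) ((apex P).1 ⊤) < 1) := by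
        rw [apex_bot, apex_top]; norm_num
      simp only [Phi1, hna, ↓reduceDIte]
      rfl
  case inl =>
    obtain ⟨q, rfl⟩ := Quot.exists_rep σ1
    have hu0 := u.2.1
    have hu1 := u.2.2
    rcases q with ⟨x, t⟩ | b
    · erw [Psi_mk_inl, gMap_mk, kap_inl, Phi_mk_inl]
      have ht0 := t.2.1
      have ht1 := t.2.2
      have hab : (iota1 P ((x,t),u)).1 ⊥ = fA t u := iota1_bot P _
      have hac : (iota1 P ((x,t),u)).1 ⊤ = fC t u := iota1_top P _
      have hmin : min ((iota1 P ((x,t),u)).1 ⊥) ((iota1 P ((x,t),u)).1 ⊤) = (u:ℝ)/2 := by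
        rw [hab, hac]; exact min_fA_fC t.2 u.2
      have hseq : 1 - (iota1 P ((x,t),u)).1 ⊥ - (iota1 P ((x,t),u)).1 ⊤ = fS t u := by
        have hsum := fACS_sum (t := (t:ℝ)) (u := (u:ℝ)) t.2
        rw [hab, hac]; linarith
      by_cases hu : (u:ℝ) < 1
      · have hlt1 : 2 * min ((iota1 P ((x,t),u)).1 ⊥) ((iota1 P ((x,t),u)).1 ⊤) < 1 := by rw [hmin]; linarith
        simp only [Phi1, hlt1, ↓reduceDIte]
        refine susp_mk_congr ?_ (by dsimp only; rw [hmin]; ring)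
        rw [PhiIn]
        have h1u : (0:ℝ) < 1 - (u:ℝ) := by linarith
        by_cases hfs : fS (t:ℝ) (u:ℝ) = 0
        · simp only [eq_true (show 1 - (iota1 P ((x,t),u)).1 ⊥ - (iota1 P ((x,t),u)).1 ⊤ = 0 by rw [hseq]; exact hfs),
            ↓reduceDIte]
          have hmin0 : min (2*(t:ℝ)) (2-2*(t:ℝ)) = 0 := by
            unfold fS at hfs
            exact (mul_eq_zero.mp hfs).resolve_left (by linarith)
          rcases le_total (2*(t:ℝ)) 1 with hth | hth
          · have ht' : (t:ℝ) = 0 := by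
              rw [min_eq_left (by linarith : 2*(t:ℝ) ≤ 2-2*(t:ℝ))] at hmin0
              linarith
            have hbb : ¬ ((iota1 P ((x,t),u)).1 ⊥ < (iota1 P ((x,t),u)).1 ⊤) := by
              rw [hab, hac]
              unfold fA fC
              rw [max_eq_left (show (0:ℝ) ≤ 1-2*(t:ℝ) by linarith),
                max_eq_right (show 2*(t:ℝ)-1 ≤ 0 by linarith), ht']
              ring_nf
              nlinarith
            rw [if_neg hbb]
            exact (Quot.sound ⟨x, t, rfl, Or.inl ⟨Subtype.ext ht', rfl⟩⟩).symm
          · have ht' : (t:ℝ) = 1 := by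
              rw [min_eq_right (by linarith : 2-2*(t:ℝ) ≤ 2*(t:ℝ))] at hmin0
              linarith
            have hbb : (iota1 P ((x,t),u)).1 ⊥ < (iota1 P ((x,t),u)).1 ⊤ := by
              rw [hab, hac]
              unfold fA fC
              rw [max_eq_right (show 1-2*(t:ℝ) ≤ 0 by linarith),
                max_eq_left (show (0:ℝ) ≤ 2*(t:ℝ)-1 by linarith), ht']
              ring_nf
              linarith
            rw [if_pos hbb]
            exact (Quot.sound ⟨x, t, rfl, Or.inr ⟨Subtype.ext ht', rfl⟩⟩).symm
        · simp only [show ¬ (1 - (iota1 P ((x,t),u)).1 ⊥ - (iota1 P ((x,t),u)).1 ⊤ = 0) from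
            fun hh => hfs (by rw [← hseq]; exact hh), ↓reduceDIte]
          refine susp_mk_congr ?_ ?_
          · refine OCext fun p => ?_
            rw [xval_apply, hseq]
            rw [show ((iota1 P ((x,t),u)).1 p.1) = fS t u * x.1 p from iota1_mem P _ p]
            exact mul_div_cancel_left₀ _ hfs
          · show tval P _ = (t:ℝ)
            unfold tval
            rcases le_total (2*(t:ℝ)) 1 with hth | hth
            · have hc' : fC (t:ℝ) (u:ℝ) = (u:ℝ)/2 := by
                unfold fC
                rw [max_eq_right (show 2*(t:ℝ)-1 ≤ (0:ℝ) by linarith)]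
                ring
              have hle : (iota1 P ((x,t),u)).1 ⊤ ≤ (iota1 P ((x,t),u)).1 ⊥ := by
                rw [hab, hac, hc']
                unfold fA
                rw [max_eq_left (show (0:ℝ) ≤ 1-2*(t:ℝ) by linarith)]
                nlinarith
              rw [if_pos hle, hseq, hac, hc']
              unfold fS
              rw [min_eq_left (by linarith : 2*(t:ℝ) ≤ 2-2*(t:ℝ))]
              field_simp
            · have ha' : fA (t:ℝ) (u:ℝ) = (u:ℝ)/2 := by
                unfold fA
                rw [max_eq_right (show 1-2*(t:ℝ) ≤ (0:ℝ) by linarith)]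
                ring
              by_cases heq : (t:ℝ) = 1/2
              · have hc' : fC (t:ℝ) (u:ℝ) = (u:ℝ)/2 := by
                  unfold fC
                  rw [heq]
                  norm_num
                have hle : (iota1 P ((x,t),u)).1 ⊤ ≤ (iota1 P ((x,t),u)).1 ⊥ := by
                  rw [hab, hac, hc', ha']
                rw [if_pos hle, hseq, hac, hc']
                unfold fS
                rw [heq]
                norm_num
                field_simp
              · have hlt : (iota1 P ((x,t),u)).1 ⊥ < (iota1 P ((x,t),u)).1 ⊤ := by
                  rw [hab, hac, ha']
                  unfold fC
                  rw [max_eq_left (show (0:ℝ) ≤ 2*(t:ℝ)-1 by linarith)]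
                  have h2t : 1 < 2*(t:ℝ) := by
                    rcases lt_or_eq_of_le hth with hh | hh
                    · linarith
                    · exact absurd (by linarith : (t:ℝ) = 1/2) heq
                  nlinarith
                rw [if_neg (not_le.mpr hlt), hseq, hab, ha']
                unfold fS
                rw [min_eq_right (by linarith : 2-2*(t:ℝ) ≤ 2*(t:ℝ))]
                field_simp
                ring
      · have hu1' : (u:ℝ) = 1 := le_antisymm hu1 (not_lt.mp hu)
        have hlt1 : ¬ (2 * min ((iota1 P ((x,t),u)).1 ⊥) ((iota1 P ((x,t),u)).1 ⊤) < 1) := by rw [hmin, hu1']; norm_num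
        simp only [Phi1, hlt1, ↓reduceDIte]
        exact (Quot.sound ⟨Quot.mk _ (Sum.inl (x,t)), u, rfl,
          Or.inr ⟨Subtype.ext hu1', rfl⟩⟩).symm
    · erw [Psi_mk_inl, gMap_mk, kap_inr, Phi_mk_inl]
      have hmin : min ((iota2 P (b,u)).1 ⊥) ((iota2 P (b,u)).1 ⊤) = (u:ℝ)/2 := by
        rw [iota2_bot, iota2_top]
        cases b
        · rw [if_neg Bool.false_ne_true, if_neg Bool.false_ne_true]
          exact min_eq_right (by linarith)
        · rw [if_pos rfl, if_pos rfl]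
          exact min_eq_left (by linarith)
      have hseq : 1 - (iota2 P (b,u)).1 ⊥ - (iota2 P (b,u)).1 ⊤ = 0 := by
        rw [iota2_bot, iota2_top]
        cases b
        · rw [if_neg Bool.false_ne_true, if_neg Bool.false_ne_true]; ring
        · rw [if_pos rfl, if_pos rfl]; ring
      by_cases hu : (u:ℝ) < 1
      · have hlt1 : 2 * min ((iota2 P (b,u)).1 ⊥) ((iota2 P (b,u)).1 ⊤) < 1 := by rw [hmin]; linarith
        simp only [Phi1, hlt1, ↓reduceDIte]
        refine susp_mk_congr ?_ (by dsimp only; rw [hmin]; ring)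
        rw [PhiIn]
        simp only [eq_true hseq, ↓reduceDIte]
        have hbb : (if (iota2 P (b,u)).1 ⊥ < (iota2 P (b,u)).1 ⊤ then true else false) = b := by
          cases b
          · rw [if_neg]
            rw [iota2_bot, iota2_top, if_neg Bool.false_ne_true, if_neg Bool.false_ne_true]
            intro hh
            linarith
          · rw [if_pos]
            rw [iota2_bot, iota2_top, if_pos rfl, if_pos rfl]
            linarith
        rw [hbb]
      · have hu1' : (u:ℝ) = 1 := le_antisymm hu1 (not_lt.mp hu)
        have hlt1 : ¬ (2 * min ((iota2 P (b,u)).1 ⊥) ((iota2 P (b,u)).1 ⊤) < 1) := by rw [hmin, hu1']; norm_num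
        simp only [Phi1, hlt1, ↓reduceDIte]
        exact (Quot.sound ⟨Quot.mk _ (Sum.inr b), u, rfl,
          Or.inr ⟨Subtype.ext hu1', rfl⟩⟩).symm

end Main

end DhatAux

instance SuspCompact {X : Type} [TopologicalSpace X] [CompactSpace X] :
    CompactSpace (Susp X) :=
  inferInstanceAs (CompactSpace (Quot _))

/-- Let `P` be a finite poset with a smallest element `⊥` and a largest element `⊤`.
If `|P| ≥ 2` then `Δ̌̂(P) = Δ(P)/(Δ(P∖{⊥}) ∪ Δ(P∖{⊤}))` is homeomorphic to the double
suspension `Σ²Δ(P∖{⊥,⊤})` of the order complex of the proper part of `P`; if `P`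
consists of a single element, it is homeomorphic to the two-point space `S⁰`. -/
theorem dhat_homeo_double_susp (P : Type) [PartialOrder P] [Fintype P]
    [DecidableEq P] [BoundedOrder P] :
    (Nontrivial P →
      Nonempty (Dhat P ⊥ ⊤ ≃ₜ Susp (Susp (OC {x : P // x ≠ ⊥ ∧ x ≠ ⊤})))) ∧
    (Subsingleton P → Nonempty (Dhat P ⊥ ⊤ ≃ₜ Bool)) := by
  constructor
  · intro hNT
    haveI := hNT
    exact ⟨(Continuous.homeoOfEquivCompactToT2
      (f := ⟨DhatAux.Psi P, DhatAux.Phi P, DhatAux.Phi_Psi P, DhatAux.Psi_Phi P⟩)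
      (DhatAux.Psi_cont P)).symm⟩
  · intro hSS
    haveI := hSS
    have key : ∀ f : OC P, f.1 ⊥ = 1 := by
      intro f
      have h := f.2.2.1
      rwa [Fintype.sum_subsingleton _ ⊥] at h
    let one : OC P := ⟨fun _ => 1, fun _ => zero_le_one,
      Fintype.sum_subsingleton _ ⊥,
      fun p _ q _ hne => absurd (Subsingleton.elim p q) hne⟩
    refine ⟨Homeomorph.mk
      ⟨Quot.lift (Sum.elim (fun _ => true) (fun _ => false)) ?_,
        fun b => if b then Quot.mk _ (Sum.inl one) else Quot.mk _ (Sum.inr ()), ?_, ?_⟩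
      ?_ ?_⟩
    · rintro a b ⟨f, hf, rfl, rfl⟩
      exfalso
      have h1 := key f
      rcases hf with h | h
      · rw [h1] at h; exact one_ne_zero h
      · rw [Subsingleton.elim (⊤:P) ⊥, h1] at h; exact one_ne_zero h
    · intro d
      obtain ⟨z, rfl⟩ := Quot.exists_rep d
      rcases z with f | u
      · show Quot.mk _ (Sum.inl one) = Quot.mk _ (Sum.inl f)
        congr 1
        apply congrArg
        refine DhatAux.OCext fun p => ?_
        show (1:ℝ) = f.1 p
        rw [Subsingleton.elim p ⊥, key f]
      · show Quot.mk _ (Sum.inr ()) = Quot.mk _ (Sum.inr u)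
        rfl
    · intro b
      cases b <;> rfl
    · exact continuous_quot_lift _ (Continuous.sumElim continuous_const continuous_const)
    · exact continuous_of_discreteTopology
end

section
/- Let P and Q be finite posets each with a largest and a smallest element. Then Δ̌̂(P × Q) is homeomorphic to the smash product Δ̌̂(P) ∧ Δ̌̂(Q), where P × Q carries the product partial order. -/
open Finset
open scoped Classical

section Wsum
variable {ι : Type} [Fintype ι] (w : ι → ℝ)

noncomputable def Wsum (φ : ι → Prop) : ℝ := ∑ x, if φ x then w x else 0

lemma Wsum_nonneg (hw : ∀ x, 0 ≤ w x) (φ : ι → Prop) : 0 ≤ Wsum w φ := by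
  refine Finset.sum_nonneg fun x _ => ?_
  split <;> [exact hw x; exact le_rfl]

lemma Wsum_mono (hw : ∀ x, 0 ≤ w x) {φ ψ : ι → Prop}
    (h : ∀ x, φ x → w x ≠ 0 → ψ x) : Wsum w φ ≤ Wsum w ψ := by
  refine Finset.sum_le_sum fun x _ => ?_
  by_cases hφ : φ x
  · by_cases hw0 : w x = 0
    · simp [hw0]
    · simp [hφ, h x hφ hw0]
  · simp only [hφ, if_false]
    split <;> [exact hw x; exact le_rfl]

lemma Wsum_congr {φ ψ : ι → Prop} (h : ∀ x, w x ≠ 0 → (φ x ↔ ψ x)) :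
    Wsum w φ = Wsum w ψ := by
  refine Finset.sum_congr rfl fun x _ => ?_
  by_cases hw0 : w x = 0
  · simp [hw0]
  · simp [h x hw0]

lemma Wsum_split {φ ψ : ι → Prop} (h : ∀ x, φ x → ψ x → False) :
    Wsum w (fun x => φ x ∨ ψ x) = Wsum w φ + Wsum w ψ := by
  rw [Wsum, Wsum, Wsum, ← Finset.sum_add_distrib]
  refine Finset.sum_congr rfl fun x _ => ?_
  by_cases hφ : φ x
  · have : ¬ψ x := fun hψ => h x hφ hψ
    simp [hφ, this]
  · by_cases hψ : ψ x <;> simp [hφ, hψ]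

lemma Wsum_single (x₀ : ι) : Wsum w (fun x => x = x₀) = w x₀ := by
  simp [Wsum]

lemma Wsum_top : Wsum w (fun _ => True) = ∑ x, w x := by simp [Wsum]

lemma Wsum_exists {φ : ι → Prop} (h : Wsum w φ ≠ 0) : ∃ x, φ x ∧ w x ≠ 0 := by
  obtain ⟨x, -, hx⟩ := Finset.exists_ne_zero_of_sum_ne_zero h
  by_cases hφ : φ x
  · exact ⟨x, hφ, by simpa [hφ] using hx⟩
  · simp [hφ] at hx

end Wsum

section OCbasic
variable {P Q : Type} [PartialOrder P] [Fintype P] [PartialOrder Q] [Fintype Q]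

lemma OC.nonneg (f : OC P) : ∀ x, 0 ≤ f.1 x := f.2.1
lemma OC.sum_one (f : OC P) : ∑ x, f.1 x = 1 := f.2.2.1
lemma OC.chain (f : OC P) : IsChain (· ≤ ·) {x | f.1 x ≠ 0} := f.2.2.2

/-- Comparability of support points. -/
lemma OC.cmp (f : OC P) {x y : P} (hx : f.1 x ≠ 0) (hy : f.1 y ≠ 0) :
    x ≤ y ∨ y ≤ x := by
  rcases eq_or_ne x y with rfl | hne
  · exact Or.inl le_rfl
  · exact f.chain hx hy hne

/-- First marginal. -/
noncomputable def marg1 (f : OC (P × Q)) : OC P := by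
  refine ⟨fun p => ∑ q, f.1 (p, q), fun p => Finset.sum_nonneg fun q _ => f.nonneg _, ?_, ?_⟩
  · show (∑ p, ∑ q, f.1 (p, q)) = 1
    rw [← Fintype.sum_prod_type]; exact f.sum_one
  · intro p hp p' hp' hne
    simp only [Set.mem_setOf_eq] at hp hp'
    obtain ⟨q, -, hq⟩ := Finset.exists_ne_zero_of_sum_ne_zero hp
    obtain ⟨q', -, hq'⟩ := Finset.exists_ne_zero_of_sum_ne_zero hp'
    rcases f.cmp hq hq' with h | h
    · exact Or.inl h.1
    · exact Or.inr h.1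

/-- Second marginal. -/
noncomputable def marg2 (f : OC (P × Q)) : OC Q := by
  refine ⟨fun q => ∑ p, f.1 (p, q), fun q => Finset.sum_nonneg fun p _ => f.nonneg _, ?_, ?_⟩
  · show (∑ q, ∑ p, f.1 (p, q)) = 1
    rw [← Fintype.sum_prod_type_right]; exact f.sum_one
  · intro q hq q' hq' hne
    simp only [Set.mem_setOf_eq] at hq hq'
    obtain ⟨p, -, hp⟩ := Finset.exists_ne_zero_of_sum_ne_zero hq
    obtain ⟨p', -, hp'⟩ := Finset.exists_ne_zero_of_sum_ne_zero hq'
    rcases f.cmp hp hp' with h | h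
    · exact Or.inl h.2
    · exact Or.inr h.2

lemma marg1_Wsum (f : OC (P × Q)) (φ : P → Prop) :
    Wsum (marg1 f).1 φ = Wsum f.1 (fun c => φ c.1) := by
  rw [Wsum, Wsum, Fintype.sum_prod_type]
  refine Finset.sum_congr rfl fun p _ => ?_
  by_cases hφ : φ p <;> simp [marg1, hφ]

lemma marg2_Wsum (f : OC (P × Q)) (φ : Q → Prop) :
    Wsum (marg2 f).1 φ = Wsum f.1 (fun c => φ c.2) := by
  rw [Wsum, Wsum, Fintype.sum_prod_type_right]
  refine Finset.sum_congr rfl fun q _ => ?_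
  by_cases hφ : φ q <;> simp [marg2, hφ]

/-- Cumulative distribution. -/
noncomputable def cum (u : OC P) (p : P) : ℝ := Wsum u.1 (fun y => y ≤ p)

lemma cum_sub (u : OC P) (p : P) :
    cum u p - u.1 p = Wsum u.1 (fun y => y ≤ p ∧ y ≠ p) := by
  have hfe : (fun y : P => y ≤ p) = fun y => (y ≤ p ∧ y ≠ p) ∨ y = p := by
    funext y
    by_cases hy : y = p
    · subst hy; simp
    · simp [hy]
  have h1 : cum u p = Wsum u.1 (fun y => y ≤ p ∧ y ≠ p) + u.1 p := by
    rw [cum, hfe, Wsum_split u.1 (by rintro y ⟨-, hy⟩ rfl; exact hy rfl), Wsum_single]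
  linarith

lemma cum_nonneg (u : OC P) (p : P) : 0 ≤ cum u p := Wsum_nonneg _ u.nonneg _

lemma cum_le_one (u : OC P) (p : P) : cum u p ≤ 1 := by
  rw [← u.sum_one, ← Wsum_top u.1]
  exact Wsum_mono _ u.nonneg fun x _ _ => trivial

lemma cum_sub_nonneg (u : OC P) (p : P) : 0 ≤ cum u p - u.1 p := by
  rw [cum_sub]; exact Wsum_nonneg _ u.nonneg _

lemma cum_le_cum_sub (u : OC P) {p p' : P} (h : p < p') :
    cum u p ≤ cum u p' - u.1 p' := by
  rw [cum_sub]
  refine Wsum_mono _ u.nonneg fun y hy _ => ⟨hy.trans h.le, ?_⟩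
  rintro rfl
  exact absurd hy (not_le_of_gt h)

end OCbasic

section Formula
variable {P Q : Type} [PartialOrder P] [Fintype P] [PartialOrder Q] [Fintype Q]

theorem oc_formula (f : OC (P × Q)) (p : P) (q : Q) :
    f.1 (p, q) = max 0 (min (cum (marg1 f) p) (cum (marg2 f) q) -
      max (cum (marg1 f) p - (marg1 f).1 p) (cum (marg2 f) q - (marg2 f).1 q)) := by
  set w := f.1 with hw
  have hG : cum (marg1 f) p = Wsum w (fun c => c.1 ≤ p) := by rw [cum, marg1_Wsum]
  have hH : cum (marg2 f) q = Wsum w (fun c => c.2 ≤ q) := by rw [cum, marg2_Wsum]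
  have hu : (marg1 f).1 p = Wsum w (fun c => c.1 = p) := by
    rw [← Wsum_single (marg1 f).1 p, marg1_Wsum]
  have hv : (marg2 f).1 q = Wsum w (fun c => c.2 = q) := by
    rw [← Wsum_single (marg2 f).1 q, marg2_Wsum]
  have hG' : cum (marg1 f) p - (marg1 f).1 p = Wsum w (fun c => c.1 ≤ p ∧ c.1 ≠ p) := by
    rw [cum_sub, marg1_Wsum]
  have hH' : cum (marg2 f) q - (marg2 f).1 q = Wsum w (fun c => c.2 ≤ q ∧ c.2 ≠ q) := by
    rw [cum_sub, marg2_Wsum]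
  by_cases hc0 : w (p, q) ≠ 0
  · -- the point (p,q) is in the support
    set L := Wsum w (fun c => c ≤ (p, q)) with hL
    set A1 := Wsum w (fun c => (p, q) < c ∧ c.1 = p) with hA1
    set A2 := Wsum w (fun c => (p, q) < c ∧ c.2 = q) with hA2
    set B1 := Wsum w (fun c => c < (p, q) ∧ c.1 = p) with hB1
    set B2 := Wsum w (fun c => c < (p, q) ∧ c.2 = q) with hB2
    have hGp : Wsum w (fun c => c.1 ≤ p) = L + A1 := by
      rw [← Wsum_split w (fun c hc1 hc2 => (not_le_of_gt hc2.1) hc1)]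
      refine Wsum_congr w fun c hcw => ?_
      constructor
      · intro h1
        rcases f.cmp hcw hc0 with h | h
        · exact Or.inl h
        · rcases eq_or_ne c (p, q) with rfl | hne
          · exact Or.inl le_rfl
          · exact Or.inr ⟨lt_of_le_of_ne h (Ne.symm hne), le_antisymm h1 h.1⟩
      · rintro (h | ⟨-, h⟩)
        · exact h.1
        · exact h.le
    have hHq : Wsum w (fun c => c.2 ≤ q) = L + A2 := by
      rw [← Wsum_split w (fun c hc1 hc2 => (not_le_of_gt hc2.1) hc1)]
      refine Wsum_congr w fun c hcw => ?_
      constructor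
      · intro h1
        rcases f.cmp hcw hc0 with h | h
        · exact Or.inl h
        · rcases eq_or_ne c (p, q) with rfl | hne
          · exact Or.inl le_rfl
          · exact Or.inr ⟨lt_of_le_of_ne h (Ne.symm hne), le_antisymm h1 h.2⟩
      · rintro (h | ⟨-, h⟩)
        · exact h.2
        · exact h.le
    have hup : Wsum w (fun c => c.1 = p) = B1 + (w (p, q) + A1) := by
      have hd1 : ∀ c : P × Q, c < (p, q) ∧ c.1 = p → (c = (p, q) ∨ ((p, q) < c ∧ c.1 = p)) → False := by
        rintro c ⟨hlt, -⟩ (rfl | ⟨hgt, -⟩)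
        · exact lt_irrefl _ hlt
        · exact lt_asymm hlt hgt
      have hd2 : ∀ c : P × Q, c = (p, q) → ((p, q) < c ∧ c.1 = p) → False := by
        rintro c rfl ⟨hgt, -⟩; exact lt_irrefl _ hgt
      rw [← Wsum_single w (p, q), ← Wsum_split w hd2, ← Wsum_split w hd1]
      refine Wsum_congr w fun c hcw => ?_
      constructor
      · intro h1
        rcases f.cmp hcw hc0 with h | h
        · rcases eq_or_ne c (p, q) with rfl | hne
          · exact Or.inr (Or.inl rfl)
          · exact Or.inl ⟨lt_of_le_of_ne h hne, h1⟩
        · rcases eq_or_ne c (p, q) with rfl | hne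
          · exact Or.inr (Or.inl rfl)
          · exact Or.inr (Or.inr ⟨lt_of_le_of_ne h (Ne.symm hne), h1⟩)
      · rintro (⟨-, h⟩ | rfl | ⟨-, h⟩) <;> simp_all
    have hvq : Wsum w (fun c => c.2 = q) = B2 + (w (p, q) + A2) := by
      have hd1 : ∀ c : P × Q, c < (p, q) ∧ c.2 = q → (c = (p, q) ∨ ((p, q) < c ∧ c.2 = q)) → False := by
        rintro c ⟨hlt, -⟩ (rfl | ⟨hgt, -⟩)
        · exact lt_irrefl _ hlt
        · exact lt_asymm hlt hgt
      have hd2 : ∀ c : P × Q, c = (p, q) → ((p, q) < c ∧ c.2 = q) → False := by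
        rintro c rfl ⟨hgt, -⟩; exact lt_irrefl _ hgt
      rw [← Wsum_single w (p, q), ← Wsum_split w hd2, ← Wsum_split w hd1]
      refine Wsum_congr w fun c hcw => ?_
      constructor
      · intro h1
        rcases f.cmp hcw hc0 with h | h
        · rcases eq_or_ne c (p, q) with rfl | hne
          · exact Or.inr (Or.inl rfl)
          · exact Or.inl ⟨lt_of_le_of_ne h hne, h1⟩
        · rcases eq_or_ne c (p, q) with rfl | hne
          · exact Or.inr (Or.inl rfl)
          · exact Or.inr (Or.inr ⟨lt_of_le_of_ne h (Ne.symm hne), h1⟩)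
      · rintro (⟨-, h⟩ | rfl | ⟨-, h⟩) <;> simp_all
    have hA : A1 = 0 ∨ A2 = 0 := by
      by_contra hcon
      push_neg at hcon
      obtain ⟨c, ⟨hgt, hc1⟩, hcw⟩ := Wsum_exists w hcon.1
      obtain ⟨c', ⟨hgt', hc'2⟩, hc'w⟩ := Wsum_exists w hcon.2
      rcases f.cmp hcw hc'w with h | h
      · have h2 : c.2 = q := le_antisymm (h.2.trans_eq hc'2) hgt.le.2
        exact hgt.ne' (Prod.ext_iff.mpr ⟨hc1, h2⟩ : c = (p, q))
      · have h1 : c'.1 = p := le_antisymm (h.1.trans_eq hc1) hgt'.le.1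
        exact hgt'.ne' (Prod.ext_iff.mpr ⟨h1, hc'2⟩ : c' = (p, q))
    have hB : B1 = 0 ∨ B2 = 0 := by
      by_contra hcon
      push_neg at hcon
      obtain ⟨c, ⟨hlt, hc1⟩, hcw⟩ := Wsum_exists w hcon.1
      obtain ⟨c', ⟨hlt', hc'2⟩, hc'w⟩ := Wsum_exists w hcon.2
      rcases f.cmp hcw hc'w with h | h
      · have hne' : c'.1 ≠ p := fun he =>
          (ne_of_lt hlt') (Prod.ext_iff.mpr ⟨he, hc'2⟩)
        have : (p : P) ≤ c'.1 := hc1 ▸ h.1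
        exact hne' (le_antisymm hlt'.le.1 this)
      · have h2 : c.2 = q := le_antisymm hlt.le.2 (hc'2 ▸ h.2)
        exact (ne_of_lt hlt) (Prod.ext_iff.mpr ⟨hc1, h2⟩)
    have hA2n : 0 ≤ A2 := Wsum_nonneg w f.nonneg _
    have hA1n : 0 ≤ A1 := Wsum_nonneg w f.nonneg _
    have hB2n : 0 ≤ B2 := Wsum_nonneg w f.nonneg _
    have hB1n : 0 ≤ B1 := Wsum_nonneg w f.nonneg _
    rw [hG, hH, hu, hv, hGp, hHq, hup, hvq]
    have hmin : min (L + A1) (L + A2) = L := by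
      rcases hA with h | h
      · rw [h, add_zero]; exact min_eq_left (by linarith)
      · rw [h, add_zero]; exact min_eq_right (by linarith)
    have e1 : (L + A1) - (B1 + (w (p, q) + A1)) = L - B1 - w (p, q) := by ring
    have e2 : (L + A2) - (B2 + (w (p, q) + A2)) = L - B2 - w (p, q) := by ring
    have hmax : max ((L + A1) - (B1 + (w (p, q) + A1)))
        ((L + A2) - (B2 + (w (p, q) + A2))) = L - w (p, q) := by
      rw [e1, e2]
      rcases hB with h | h
      · rw [h]; rw [max_eq_left (by linarith)]; ring
      · rw [h]; rw [max_eq_right (by linarith)]; ring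
    rw [hmin, hmax]
    have : L - (L - w (p, q)) = w (p, q) := by ring
    rw [this, max_eq_right (f.nonneg _)]
  · rw [not_not] at hc0
    have hle : min (cum (marg1 f) p) (cum (marg2 f) q) ≤
        max (cum (marg1 f) p - (marg1 f).1 p) (cum (marg2 f) q - (marg2 f).1 q) := by
      by_cases hup : (marg1 f).1 p = 0
      · refine le_trans (min_le_left _ _) (le_trans ?_ (le_max_left _ _))
        rw [hup]; linarith
      · by_cases hvq : (marg2 f).1 q = 0
        · refine le_trans (min_le_right _ _) (le_trans ?_ (le_max_right _ _))
          rw [hvq]; linarith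
        · rw [hu] at hup
          rw [hv] at hvq
          obtain ⟨c, hc1, hcw⟩ := Wsum_exists w hup
          obtain ⟨c', hc'2, hc'w⟩ := Wsum_exists w hvq
          have hc2 : c.2 ≠ q := fun h =>
            hcw (by rw [show c = (p, q) from Prod.ext_iff.mpr ⟨hc1, h⟩]; exact hc0)
          have hc'1 : c'.1 ≠ p := fun h =>
            hc'w (by rw [show c' = (p, q) from Prod.ext_iff.mpr ⟨h, hc'2⟩]; exact hc0)
          rcases f.cmp hcw hc'w with hcc | hcc
          · -- c ≤ c' : show cum u p ≤ cum v q - v q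
            have hpc' : p < c'.1 := lt_of_le_of_ne (hc1 ▸ hcc.1) (Ne.symm hc'1)
            have key : ∀ d : P × Q, d.1 ≤ p → w d ≠ 0 → (d.2 ≤ q ∧ d.2 ≠ q) := by
              intro d hd1 hdw
              have hdc' : d ≤ c' := by
                rcases f.cmp hdw hc'w with h | h
                · exact h
                · exact absurd (h.1.trans hd1) (not_le_of_gt hpc')
              have hd2q : d.2 ≤ q := hdc'.2.trans_eq hc'2
              refine ⟨hd2q, fun hdq => ?_⟩
              have hd1p : d.1 ≠ p := fun h =>
                hdw (by rw [show d = (p, q) from Prod.ext_iff.mpr ⟨h, hdq⟩]; exact hc0)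
              have hd1lt : d.1 < p := lt_of_le_of_ne hd1 hd1p
              rcases f.cmp hdw hcw with h | h
              · exact hc2 (le_antisymm (hcc.2.trans_eq hc'2) (hdq ▸ h.2))
              · exact absurd (hc1 ▸ h.1) (not_le_of_gt hd1lt)
            refine le_trans (min_le_left _ _) (le_trans ?_ (le_max_right _ _))
            rw [hG, hH']
            exact Wsum_mono w f.nonneg key
          · -- c' ≤ c : show cum v q ≤ cum u p - u p
            have hqc : q < c.2 := lt_of_le_of_ne (hc'2 ▸ hcc.2) (Ne.symm hc2)
            have key : ∀ d : P × Q, d.2 ≤ q → w d ≠ 0 → (d.1 ≤ p ∧ d.1 ≠ p) := by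
              intro d hd2 hdw
              have hdc : d ≤ c := by
                rcases f.cmp hdw hcw with h | h
                · exact h
                · exact absurd (h.2.trans hd2) (not_le_of_gt hqc)
              have hd1p : d.1 ≤ p := hdc.1.trans_eq hc1
              refine ⟨hd1p, fun hdp => ?_⟩
              have hd2q : d.2 ≠ q := fun h =>
                hdw (by rw [show d = (p, q) from Prod.ext_iff.mpr ⟨hdp, h⟩]; exact hc0)
              have hd2lt : d.2 < q := lt_of_le_of_ne hd2 hd2q
              rcases f.cmp hdw hc'w with h | h
              · exact hc'1 (le_antisymm (hcc.1.trans_eq hc1) (hdp ▸ h.1))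
              · exact absurd (hc'2 ▸ h.2) (not_le_of_gt hd2lt)
            refine le_trans (min_le_right _ _) (le_trans ?_ (le_max_left _ _))
            rw [hH, hG']
            exact Wsum_mono w f.nonneg key
    rw [hc0]
    symm
    exact max_eq_left (by linarith)

theorem marg_inj {f f' : OC (P × Q)} (h1 : marg1 f = marg1 f') (h2 : marg2 f = marg2 f') :
    f = f' := by
  refine Subtype.ext (funext fun c => ?_)
  obtain ⟨p, q⟩ := c
  rw [oc_formula f p q, oc_formula f' p q, h1, h2]

end Formula

lemma clamp_diff {a b u v : ℝ} (hab : a ≤ b) (huv : u ≤ v) :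
    min b (max a v) - min b (max a u) = max 0 (min b v - max a u) := by
  simp only [min_def, max_def]
  split_ifs <;> linarith

section Clamp
variable {Q : Type} [PartialOrder Q] [Fintype Q]

noncomputable def clampTerm (a b : ℝ) (h : Q → ℝ) (q : Q) : ℝ :=
  max 0 (min b (Wsum h (fun y => y ≤ q)) - max a (Wsum h (fun y => y ≤ q) - h q))

lemma clampTerm_zero {a b : ℝ} {h : Q → ℝ} {q : Q} (hq : h q = 0) :
    clampTerm a b h q = 0 := by
  rw [clampTerm, hq, sub_zero]
  exact max_eq_left (by
    linarith [min_le_right b (Wsum h (fun y => y ≤ q)),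
      le_max_right a (Wsum h (fun y => y ≤ q))])

lemma sum_clamp : ∀ (n : ℕ) (h : Q → ℝ), (univ.filter fun x => h x ≠ 0).card = n →
    (∀ x, 0 ≤ h x) → IsChain (· ≤ ·) {x | h x ≠ 0} → ∀ a b : ℝ, a ≤ b →
    ∑ q, clampTerm a b h q = min b (max a (∑ y, h y)) - min b (max a 0) := by
  intro n
  induction n with
  | zero =>
    intro h hcard h0 hch a b hab
    have hz : ∀ x, h x = 0 := by
      intro x
      by_contra hx
      have : x ∈ univ.filter fun x => h x ≠ 0 := mem_filter.mpr ⟨mem_univ _, hx⟩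
      rw [Finset.card_eq_zero.mp hcard] at this
      exact absurd this (notMem_empty x)
    have : ∀ q : Q, clampTerm a b h q = 0 := fun q => clampTerm_zero (hz q)
    rw [Finset.sum_congr rfl fun q _ => this q]
    simp [hz]
  | succ n ih =>
    intro h hcard h0 hch a b hab
    have hne : (univ.filter fun x => h x ≠ 0).Nonempty :=
      Finset.card_pos.mp (by rw [hcard]; exact n.succ_pos)
    obtain ⟨qs, hqsmem, hqsmax⟩ : ∃ m ∈ (univ.filter fun x => h x ≠ 0),
        ∀ x ∈ (univ.filter fun x => h x ≠ 0), ¬ m < x := by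
      obtain ⟨m, hm⟩ := Finset.exists_maximal hne
      exact ⟨m, hm.1, fun x hx hlt => not_le_of_gt hlt (hm.2 hx hlt.le)⟩
    have hqsne : h qs ≠ 0 := (mem_filter.mp hqsmem).2
    have hmax : ∀ y, h y ≠ 0 → y ≤ qs := by
      intro y hy
      rcases eq_or_ne y qs with rfl | hne'
      · exact le_rfl
      · rcases hch hy hqsne hne' with h' | h'
        · exact h'
        · exact absurd (lt_of_le_of_ne h' (Ne.symm hne'))
            (hqsmax y (mem_filter.mpr ⟨mem_univ _, hy⟩))
    set h' := Function.update h qs 0 with hh'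
    have h'apply : ∀ x, x ≠ qs → h' x = h x := fun x hx => Function.update_of_ne hx _ _
    have h'qs : h' qs = 0 := Function.update_self _ _ _
    have h'0 : ∀ x, 0 ≤ h' x := by
      intro x
      rcases eq_or_ne x qs with rfl | hx
      · rw [h'qs]
      · rw [h'apply x hx]; exact h0 x
    have hsupp' : (univ.filter fun x => h' x ≠ 0) = (univ.filter fun x => h x ≠ 0).erase qs := by
      ext x
      simp only [mem_filter, mem_erase, mem_univ, true_and]
      rcases eq_or_ne x qs with rfl | hx
      · simp [h'qs]
      · simp [hx, h'apply x hx]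
    have hcard' : (univ.filter fun x => h' x ≠ 0).card = n := by
      rw [hsupp', Finset.card_erase_of_mem hqsmem, hcard]
      rfl
    have hch' : IsChain (· ≤ ·) {x | h' x ≠ 0} := by
      intro x hx y hy hxy
      refine hch ?_ ?_ hxy
      · simp only [Set.mem_setOf_eq] at hx ⊢
        intro hx0
        rcases eq_or_ne x qs with rfl | hxqs
        · exact hx h'qs
        · rw [h'apply x hxqs] at hx; exact hx hx0
      · simp only [Set.mem_setOf_eq] at hy ⊢
        intro hy0
        rcases eq_or_ne y qs with rfl | hyqs
        · exact hy h'qs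
        · rw [h'apply y hyqs] at hy; exact hy hy0
    have hWs : ∀ φ : Q → Prop, Wsum h' φ = Wsum h φ - (if φ qs then h qs else 0) := by
      intro φ
      have hpt : ∀ x, (if φ x then h' x else 0) =
          (if φ x then h x else 0) - (if x = qs then (if φ qs then h qs else 0) else 0) := by
        intro x
        rcases eq_or_ne x qs with rfl | hx
        · by_cases hφ : φ x <;> simp [hφ, h'qs]
        · simp [hx, h'apply x hx]
      rw [Wsum, Finset.sum_congr rfl fun x _ => hpt x, Finset.sum_sub_distrib]
      simp [Wsum]
    have hsum' : ∑ y, h' y = (∑ y, h y) - h qs := by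
      have := hWs (fun _ => True)
      rw [Wsum_top, Wsum_top] at this
      simpa using this
    have hterm : ∀ q, q ≠ qs → clampTerm a b h q = clampTerm a b h' q := by
      intro q hq
      by_cases hle : qs ≤ q
      · have hq0 : h q = 0 := by
          by_contra hq0
          exact hq (le_antisymm (hmax q hq0) hle)
        have h'q0 : h' q = 0 := by rw [h'apply q hq]; exact hq0
        rw [clampTerm_zero hq0, clampTerm_zero h'q0]
      · have hWeq : Wsum h' (fun y => y ≤ q) = Wsum h (fun y => y ≤ q) := by
          rw [hWs]; simp [hle]
        rw [clampTerm, clampTerm, hWeq, h'apply q hq]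
    have hsplit : (∑ q, clampTerm a b h q) - ∑ q, clampTerm a b h' q =
        clampTerm a b h qs - clampTerm a b h' qs := by
      rw [← Finset.sum_sub_distrib]
      refine Finset.sum_eq_single qs (fun q _ hq => by rw [hterm q hq, sub_self])
        (fun hqs => absurd (mem_univ qs) hqs)
    have hTh'qs : clampTerm a b h' qs = 0 := clampTerm_zero h'qs
    have hThqs : clampTerm a b h qs =
        min b (max a (∑ y, h y)) - min b (max a ((∑ y, h y) - h qs)) := by
      have hWqs : Wsum h (fun y => y ≤ qs) = ∑ y, h y := by
        rw [← Wsum_top h]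
        exact Wsum_congr h fun y hy => by simp [hmax y hy]
      rw [clampTerm, hWqs]
      exact (clamp_diff hab (by linarith [h0 qs])).symm
    have ihh := ih h' hcard' h'0 hch' a b hab
    rw [hsum'] at ihh
    linarith

end Clamp

section Couple
variable {P Q : Type} [PartialOrder P] [Fintype P] [PartialOrder Q] [Fintype Q]

lemma cum_def (u : OC P) (p : P) : cum u p = Wsum u.1 (fun y => y ≤ p) := rfl

noncomputable def cpl (u : OC P) (v : OC Q) : P × Q → ℝ := fun c =>
  max 0 (min (cum u c.1) (cum v c.2) - max (cum u c.1 - u.1 c.1) (cum v c.2 - v.1 c.2))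

lemma cpl_clamp1 (u : OC P) (v : OC Q) (p : P) (q : Q) :
    cpl u v (p, q) = clampTerm (cum u p - u.1 p) (cum u p) v.1 q := rfl

lemma cpl_clamp2 (u : OC P) (v : OC Q) (p : P) (q : Q) :
    cpl u v (p, q) = clampTerm (cum v q - v.1 q) (cum v q) u.1 p := by
  rw [clampTerm, ← cum_def, cpl]
  rw [min_comm (cum v q) (cum u p), max_comm (cum v q - v.1 q) (cum u p - u.1 p)]

lemma cpl_nonneg (u : OC P) (v : OC Q) (c : P × Q) : 0 ≤ cpl u v c := le_max_left _ _

lemma cpl_marg1 (u : OC P) (v : OC Q) (p : P) : ∑ q, cpl u v (p, q) = u.1 p := by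
  have hab : cum u p - u.1 p ≤ cum u p := by linarith [u.nonneg p]
  have hs := sum_clamp _ v.1 rfl v.nonneg v.chain (cum u p - u.1 p) (cum u p) hab
  rw [v.sum_one] at hs
  have h0a : 0 ≤ cum u p - u.1 p := cum_sub_nonneg u p
  have hb1 : cum u p ≤ 1 := cum_le_one u p
  have ha1 : cum u p - u.1 p ≤ 1 := le_trans hab hb1
  rw [max_eq_right ha1, min_eq_left hb1, max_eq_left h0a, min_eq_right hab] at hs
  rw [Finset.sum_congr rfl fun q _ => cpl_clamp1 u v p q, hs]
  ring

lemma cpl_marg2 (u : OC P) (v : OC Q) (q : Q) : ∑ p, cpl u v (p, q) = v.1 q := by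
  have hab : cum v q - v.1 q ≤ cum v q := by linarith [v.nonneg q]
  have hs := sum_clamp _ u.1 rfl u.nonneg u.chain (cum v q - v.1 q) (cum v q) hab
  rw [u.sum_one] at hs
  have h0a : 0 ≤ cum v q - v.1 q := cum_sub_nonneg v q
  have hb1 : cum v q ≤ 1 := cum_le_one v q
  have ha1 : cum v q - v.1 q ≤ 1 := le_trans hab hb1
  rw [max_eq_right ha1, min_eq_left hb1, max_eq_left h0a, min_eq_right hab] at hs
  rw [Finset.sum_congr rfl fun p _ => cpl_clamp2 u v p q, hs]
  ring

lemma cpl_total (u : OC P) (v : OC Q) : ∑ c, cpl u v c = 1 := by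
  rw [Fintype.sum_prod_type]
  rw [Finset.sum_congr rfl fun p _ => cpl_marg1 u v p]
  exact u.sum_one

lemma cpl_chain (u : OC P) (v : OC Q) : IsChain (· ≤ ·) {c | cpl u v c ≠ 0} := by
  have fact : ∀ (p : P) (q : Q), cpl u v (p, q) ≠ 0 →
      u.1 p ≠ 0 ∧ v.1 q ≠ 0 ∧ cum v q - v.1 q < cum u p ∧ cum u p - u.1 p < cum v q := by
    intro p q hc
    have hx : max (cum u p - u.1 p) (cum v q - v.1 q) < min (cum u p) (cum v q) := by
      by_contra hcon
      push_neg at hcon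
      exact hc (max_eq_left (by linarith))
    have h1 : cum v q - v.1 q < cum u p :=
      lt_of_lt_of_le (lt_of_le_of_lt (le_max_right _ _) hx) (min_le_left _ _)
    have h2 : cum u p - u.1 p < cum v q :=
      lt_of_lt_of_le (lt_of_le_of_lt (le_max_left _ _) hx) (min_le_right _ _)
    have hu : u.1 p ≠ 0 := by
      intro h
      have := lt_of_le_of_lt (le_max_left _ _) hx
      rw [h, sub_zero] at this
      exact absurd (min_le_left (cum u p) (cum v q)) (not_le_of_gt this)
    have hv : v.1 q ≠ 0 := by
      intro h
      have := lt_of_le_of_lt (le_max_right _ _) hx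
      rw [h, sub_zero] at this
      exact absurd (min_le_right (cum u p) (cum v q)) (not_le_of_gt this)
    exact ⟨hu, hv, h1, h2⟩
  rintro ⟨p, q⟩ hc ⟨p', q'⟩ hc' hne
  obtain ⟨hu, hv, h1, h2⟩ := fact p q hc
  obtain ⟨hu', hv', h1', h2'⟩ := fact p' q' hc'
  have hpp : p ≤ p' ∨ p' ≤ p := u.cmp hu hu'
  have hqq : q ≤ q' ∨ q' ≤ q := v.cmp hv hv'
  rcases hpp with hp | hp <;> rcases hqq with hq | hq
  · exact Or.inl ⟨hp, hq⟩
  · -- p ≤ p', q' ≤ q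
    rcases eq_or_ne p p' with rfl | hpne
    · exact Or.inr ⟨le_rfl, hq⟩
    · rcases eq_or_ne q q' with rfl | hqne
      · exact Or.inl ⟨hp, le_rfl⟩
      · exfalso
        have hplt : p < p' := lt_of_le_of_ne hp hpne
        have hqlt : q' < q := lt_of_le_of_ne hq (Ne.symm hqne)
        have e1 : cum u p ≤ cum u p' - u.1 p' := cum_le_cum_sub u hplt
        have e2 : cum v q' ≤ cum v q - v.1 q := cum_le_cum_sub v hqlt
        linarith
  · -- p' ≤ p, q ≤ q'
    rcases eq_or_ne p' p with rfl | hpne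
    · exact Or.inl ⟨le_rfl, hq⟩
    · rcases eq_or_ne q' q with rfl | hqne
      · exact Or.inr ⟨hp, le_rfl⟩
      · exfalso
        have hplt : p' < p := lt_of_le_of_ne hp hpne
        have hqlt : q < q' := lt_of_le_of_ne hq (Ne.symm hqne)
        have e1 : cum u p' ≤ cum u p - u.1 p := cum_le_cum_sub u hplt
        have e2 : cum v q ≤ cum v q' - v.1 q' := cum_le_cum_sub v hqlt
        linarith
  · exact Or.inr ⟨hp, hq⟩

noncomputable def couple (u : OC P) (v : OC Q) : OC (P × Q) :=
  ⟨cpl u v, cpl_nonneg u v, cpl_total u v, cpl_chain u v⟩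

lemma marg1_couple (u : OC P) (v : OC Q) : marg1 (couple u v) = u :=
  Subtype.ext (funext fun p => cpl_marg1 u v p)

lemma marg2_couple (u : OC P) (v : OC Q) : marg2 (couple u v) = v :=
  Subtype.ext (funext fun q => cpl_marg2 u v q)

end Couple

section Bounded
variable {P Q : Type} [PartialOrder P] [Fintype P] [BoundedOrder P]
  [PartialOrder Q] [Fintype Q] [BoundedOrder Q]

lemma marg_bot (f : OC (P × Q)) (hf : f.1 (⊥, ⊥) = 0) :
    (marg1 f).1 ⊥ = 0 ∨ (marg2 f).1 ⊥ = 0 := by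
  by_contra hcon
  push_neg at hcon
  obtain ⟨h1, h2⟩ := hcon
  have h1' : ∑ q, f.1 (⊥, q) ≠ 0 := h1
  have h2' : ∑ p, f.1 (p, ⊥) ≠ 0 := h2
  obtain ⟨q0, -, hq0⟩ := Finset.exists_ne_zero_of_sum_ne_zero h1'
  obtain ⟨p0, -, hp0⟩ := Finset.exists_ne_zero_of_sum_ne_zero h2'
  rcases f.cmp hq0 hp0 with h | h
  · have : q0 = ⊥ := le_bot_iff.mp h.2
    rw [this] at hq0
    exact hq0 hf
  · have : p0 = ⊥ := le_bot_iff.mp h.1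
    rw [this] at hp0
    exact hp0 hf

lemma marg_top (f : OC (P × Q)) (hf : f.1 (⊤, ⊤) = 0) :
    (marg1 f).1 ⊤ = 0 ∨ (marg2 f).1 ⊤ = 0 := by
  by_contra hcon
  push_neg at hcon
  obtain ⟨h1, h2⟩ := hcon
  have h1' : ∑ q, f.1 (⊤, q) ≠ 0 := h1
  have h2' : ∑ p, f.1 (p, ⊤) ≠ 0 := h2
  obtain ⟨q0, -, hq0⟩ := Finset.exists_ne_zero_of_sum_ne_zero h1'
  obtain ⟨p0, -, hp0⟩ := Finset.exists_ne_zero_of_sum_ne_zero h2'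
  rcases f.cmp hq0 hp0 with h | h
  · have : p0 = ⊤ := top_le_iff.mp h.1
    rw [this] at hp0
    exact hp0 hf
  · have : q0 = ⊤ := top_le_iff.mp h.2
    rw [this] at hq0
    exact hq0 hf

lemma marg1_ne_of_ne {f : OC (P × Q)} {p : P} {q : Q} (h : f.1 (p, q) ≠ 0) :
    (marg1 f).1 p ≠ 0 := by
  have hle : f.1 (p, q) ≤ ∑ q', f.1 (p, q') :=
    Finset.single_le_sum (fun q' _ => f.nonneg _) (mem_univ q)
  have hpos : 0 < f.1 (p, q) := lt_of_le_of_ne (f.nonneg _) (Ne.symm h)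
  intro h0
  have h0' : ∑ q', f.1 (p, q') = 0 := h0
  linarith

lemma marg2_ne_of_ne {f : OC (P × Q)} {p : P} {q : Q} (h : f.1 (p, q) ≠ 0) :
    (marg2 f).1 q ≠ 0 := by
  have hle : f.1 (p, q) ≤ ∑ p', f.1 (p', q) :=
    Finset.single_le_sum (f := fun p' => f.1 (p', q)) (fun p' _ => f.nonneg _) (mem_univ p)
  have hpos : 0 < f.1 (p, q) := lt_of_le_of_ne (f.nonneg _) (Ne.symm h)
  intro h0
  have h0' : ∑ p', f.1 (p', q) = 0 := h0
  linarith

end Bounded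

section Compactness
variable {R : Type} [PartialOrder R] [Fintype R]

instance OC.compactSpace : CompactSpace (OC R) := by
  have hsub : {f : R → ℝ | (∀ x, 0 ≤ f x) ∧ (∑ x, f x) = 1 ∧ IsChain (· ≤ ·) {x | f x ≠ 0}} ⊆
      Set.pi Set.univ (fun _ : R => Set.Icc (0:ℝ) 1) := by
    rintro f ⟨h0, h1, -⟩ x -
    refine ⟨h0 x, ?_⟩
    rw [← h1]
    exact Finset.single_le_sum (fun y _ => h0 y) (mem_univ x)
  have hc1 : IsClosed {f : R → ℝ | ∀ x, 0 ≤ f x} := by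
    have : {f : R → ℝ | ∀ x, 0 ≤ f x} = ⋂ x, {f | 0 ≤ f x} := by
      ext f; simp [Set.mem_iInter]
    rw [this]
    exact isClosed_iInter fun x => isClosed_le continuous_const (continuous_apply x)
  have hc2 : IsClosed {f : R → ℝ | (∑ x, f x) = 1} :=
    isClosed_eq (continuous_finset_sum univ fun x _ => continuous_apply x) continuous_const
  have hc3 : IsClosed {f : R → ℝ | IsChain (· ≤ ·) {x | f x ≠ 0}} := by
    have he : {f : R → ℝ | IsChain (· ≤ ·) {x | f x ≠ 0}} =
        ⋂ (x : R), ⋂ (y : R), {f : R → ℝ | (x ≤ y ∨ y ≤ x ∨ x = y) ∨ f x = 0 ∨ f y = 0} := by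
      ext f
      simp only [Set.mem_setOf_eq, Set.mem_iInter]
      constructor
      · intro hch x y
        by_cases hcmp : x ≤ y ∨ y ≤ x ∨ x = y
        · exact Or.inl hcmp
        · push_neg at hcmp
          refine Or.inr ?_
          by_contra hne
          push_neg at hne
          rcases hch (hne.1 : f x ≠ 0) (hne.2 : f y ≠ 0) hcmp.2.2 with h | h
          · exact hcmp.1 h
          · exact hcmp.2.1 h
      · intro hall x hx y hy hne
        rcases hall x y with (h | h | h) | h | h
        · exact Or.inl h
        · exact Or.inr h
        · exact absurd h hne
        · exact absurd h hx
        · exact absurd h hy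
    rw [he]
    refine isClosed_iInter fun x => isClosed_iInter fun y => ?_
    by_cases hcmp : x ≤ y ∨ y ≤ x ∨ x = y
    · have : {f : R → ℝ | (x ≤ y ∨ y ≤ x ∨ x = y) ∨ f x = 0 ∨ f y = 0} = Set.univ := by
        ext f; simp [hcmp]
      rw [this]; exact isClosed_univ
    · have : {f : R → ℝ | (x ≤ y ∨ y ≤ x ∨ x = y) ∨ f x = 0 ∨ f y = 0} =
          {f : R → ℝ | f x = 0} ∪ {f : R → ℝ | f y = 0} := by
        ext f; simp [hcmp]
      rw [this]
      exact IsClosed.union (isClosed_eq (continuous_apply x) continuous_const)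
        (isClosed_eq (continuous_apply y) continuous_const)
  have hclosed : IsClosed {f : R → ℝ |
      (∀ x, 0 ≤ f x) ∧ (∑ x, f x) = 1 ∧ IsChain (· ≤ ·) {x | f x ≠ 0}} := by
    have : {f : R → ℝ | (∀ x, 0 ≤ f x) ∧ (∑ x, f x) = 1 ∧ IsChain (· ≤ ·) {x | f x ≠ 0}} =
        {f : R → ℝ | ∀ x, 0 ≤ f x} ∩ ({f : R → ℝ | (∑ x, f x) = 1} ∩
          {f : R → ℝ | IsChain (· ≤ ·) {x | f x ≠ 0}}) := rfl
    rw [this]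
    exact hc1.inter (hc2.inter hc3)
  have hcpt : IsCompact {f : R → ℝ |
      (∀ x, 0 ≤ f x) ∧ (∑ x, f x) = 1 ∧ IsChain (· ≤ ·) {x | f x ≠ 0}} :=
    IsCompact.of_isClosed_subset (isCompact_univ_pi fun _ => isCompact_Icc) hclosed hsub
  exact isCompact_iff_compactSpace.mp hcpt

end Compactness

/-- The basepoint of `X/A`. -/
def PCollapse.pt (X : Type) [TopologicalSpace X] (A : Set X) : PCollapse X A :=
  Quot.mk _ (Sum.inr ())

/-- Basepoint of `Δ̌̂(P)`. -/
def Dhat.pt (P : Type) [PartialOrder P] [Fintype P] (b t : P) : Dhat P b t :=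
  PCollapse.pt _ _

/-- The relation defining the smash product `X ∧ Y` of based spaces:
collapse `X ∨ Y = X × {y₀} ∪ {x₀} × Y` to a point. -/
def smashRel (X Y : Type) (x₀ : X) (y₀ : Y) : X × Y → X × Y → Prop :=
  fun a b => (a.1 = x₀ ∨ a.2 = y₀) ∧ (b.1 = x₀ ∨ b.2 = y₀)

/-- The smash product `X ∧ Y` of based spaces. -/
def Smash (X Y : Type) [TopologicalSpace X] [TopologicalSpace Y] (x₀ : X) (y₀ : Y) : Type :=
  Quot (smashRel X Y x₀ y₀)

instance (X Y : Type) [TopologicalSpace X] [TopologicalSpace Y] (x₀ : X) (y₀ : Y) :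
    TopologicalSpace (Smash X Y x₀ y₀) :=
  inferInstanceAs (TopologicalSpace (Quot _))

/-- Basepoint of the smash product. -/
def Smash.pt (X Y : Type) [TopologicalSpace X] [TopologicalSpace Y] (x₀ : X) (y₀ : Y) :
    Smash X Y x₀ y₀ :=
  Quot.mk _ (x₀, y₀)

section QuotEq

variable {X : Type} [TopologicalSpace X] {A : Set X}

/-- Membership in the collapsed part (including the added basepoint). -/
def inW (A : Set X) (s : X ⊕ Unit) : Prop :=
  s = Sum.inr () ∨ ∃ x ∈ A, s = Sum.inl x

lemma pcollapse_mk_eq {a b : X ⊕ Unit} :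
    (Quot.mk (pcollapseRel X A) a = Quot.mk (pcollapseRel X A) b) ↔
      a = b ∨ (inW A a ∧ inW A b) := by
  constructor
  · intro h
    have h' := Quot.eq.mp h
    clear h
    induction h' with
    | rel x y hxy =>
      obtain ⟨t, ht, rfl, rfl⟩ := hxy
      exact Or.inr ⟨Or.inr ⟨t, ht, rfl⟩, Or.inl rfl⟩
    | refl x => exact Or.inl rfl
    | symm x y _ ih =>
      rcases ih with rfl | ⟨h1, h2⟩
      · exact Or.inl rfl
      · exact Or.inr ⟨h2, h1⟩
    | trans x y z _ _ ih1 ih2 =>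
      rcases ih1 with rfl | ⟨h1, h2⟩
      · exact ih2
      · rcases ih2 with rfl | ⟨h3, h4⟩
        · exact Or.inr ⟨h1, h2⟩
        · exact Or.inr ⟨h1, h4⟩
  · rintro (rfl | ⟨ha, hb⟩)
    · rfl
    · have key : ∀ s, inW A s →
          Quot.mk (pcollapseRel X A) s = Quot.mk (pcollapseRel X A) (Sum.inr ()) := by
        rintro s (rfl | ⟨x, hx, rfl⟩)
        · rfl
        · exact Quot.sound ⟨x, hx, rfl, rfl⟩
      rw [key a ha, key b hb]

end QuotEq

section SmashEq
variable {X Y : Type} [TopologicalSpace X] [TopologicalSpace Y] {x₀ : X} {y₀ : Y}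

lemma smash_mk_eq {a b : X × Y} :
    (Quot.mk (smashRel X Y x₀ y₀) a = Quot.mk (smashRel X Y x₀ y₀) b) ↔
      a = b ∨ ((a.1 = x₀ ∨ a.2 = y₀) ∧ (b.1 = x₀ ∨ b.2 = y₀)) := by
  constructor
  · intro h
    have h' := Quot.eq.mp h
    clear h
    induction h' with
    | rel x y hxy => exact Or.inr hxy
    | refl x => exact Or.inl rfl
    | symm x y _ ih =>
      rcases ih with rfl | ⟨h1, h2⟩
      · exact Or.inl rfl
      · exact Or.inr ⟨h2, h1⟩
    | trans x y z _ _ ih1 ih2 =>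
      rcases ih1 with rfl | ⟨h1, h2⟩
      · exact ih2
      · rcases ih2 with rfl | ⟨h3, h4⟩
        · exact Or.inr ⟨h1, h2⟩
        · exact Or.inr ⟨h1, h4⟩
  · rintro (rfl | ⟨ha, hb⟩)
    · rfl
    · have key : ∀ s : X × Y, (s.1 = x₀ ∨ s.2 = y₀) →
          Quot.mk (smashRel X Y x₀ y₀) s = Quot.mk (smashRel X Y x₀ y₀) (x₀, y₀) := by
        intro s hs
        exact Quot.sound ⟨hs, Or.inl rfl⟩
      rw [key a ha, key b hb]

lemma smash_wedge_eq_pt {a : X × Y} (ha : a.1 = x₀ ∨ a.2 = y₀) :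
    (Quot.mk (smashRel X Y x₀ y₀) a : Smash X Y x₀ y₀) = Smash.pt X Y x₀ y₀ :=
  Quot.sound ⟨ha, Or.inl rfl⟩

end SmashEq

section DhatLemmas
variable {R : Type} [PartialOrder R] [Fintype R] (b t : R)

lemma dhat_cases (x : Dhat R b t) :
    x = Dhat.pt R b t ∨ ∃ f : OC R, (f.1 b ≠ 0 ∧ f.1 t ≠ 0) ∧
      x = Quot.mk _ (Sum.inl f) := by
  obtain ⟨s, rfl⟩ := Quot.exists_rep x
  rcases s with f | u
  · by_cases hf : f.1 b = 0 ∨ f.1 t = 0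
    · exact Or.inl (Quot.sound ⟨f, hf, rfl, rfl⟩)
    · push_neg at hf
      exact Or.inr ⟨f, hf, rfl⟩
  · exact Or.inl rfl

lemma dhat_val_ne_pt {f : OC R} (hb : f.1 b ≠ 0) (ht : f.1 t ≠ 0) :
    (Quot.mk _ (Sum.inl f) : Dhat R b t) ≠ Dhat.pt R b t := by
  intro h
  rcases pcollapse_mk_eq.mp h with h' | ⟨h1, -⟩
  · exact absurd h' (by simp)
  · rcases h1 with h' | ⟨x, hx, h'⟩
    · exact absurd h' (by simp)
    · have : f = x := Sum.inl.inj h'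
      subst this
      rcases hx with h'' | h''
      · exact hb h''
      · exact ht h''

lemma dhat_val_inj {f f' : OC R} (hb : f.1 b ≠ 0) (ht : f.1 t ≠ 0)
    (hb' : f'.1 b ≠ 0) (ht' : f'.1 t ≠ 0)
    (h : (Quot.mk _ (Sum.inl f) : Dhat R b t) = Quot.mk _ (Sum.inl f')) : f = f' := by
  rcases pcollapse_mk_eq.mp h with h' | ⟨h1, -⟩
  · exact Sum.inl.inj h'
  · rcases h1 with h' | ⟨x, hx, h'⟩
    · exact absurd h' (by simp)
    · have : f = x := Sum.inl.inj h'
      subst this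
      rcases hx with h'' | h''
      · exact absurd h'' hb
      · exact absurd h'' ht

end DhatLemmas

section Jmap
variable {R : Type} [PartialOrder R] [Fintype R]

noncomputable def jmap (b t : R) (f : OC R) : R → ℝ := (f.1 b * f.1 t) • f.1

lemma jmap_apply (b t : R) (f : OC R) (x : R) :
    jmap b t f x = (f.1 b * f.1 t) * f.1 x := rfl

lemma jmap_sum (b t : R) (f : OC R) : ∑ x, jmap b t f x = f.1 b * f.1 t := by
  simp only [jmap_apply, ← Finset.mul_sum, f.sum_one, mul_one]

lemma jmap_zero {b t : R} {f : OC R} (hf : f.1 b = 0 ∨ f.1 t = 0) : jmap b t f = 0 := by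
  funext x
  rcases hf with h | h <;> simp [jmap_apply, h]

lemma jmap_inj {b t : R} {f f' : OC R} (hb : f.1 b ≠ 0) (ht : f.1 t ≠ 0)
    (h : jmap b t f = jmap b t f') : f = f' := by
  have hs : f.1 b * f.1 t = f'.1 b * f'.1 t := by
    rw [← jmap_sum b t f, ← jmap_sum b t f', h]
  have hne : f.1 b * f.1 t ≠ 0 := mul_ne_zero hb ht
  refine Subtype.ext (funext fun x => ?_)
  have hx := congrFun h x
  rw [jmap_apply, jmap_apply, ← hs] at hx
  exact mul_left_cancel₀ hne hx

lemma jmap_continuous (b t : R) : Continuous (jmap b t) := by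
  show Continuous fun f : OC R => (f.1 b * f.1 t) • f.1
  refine Continuous.smul (M := ℝ) ?_ (continuous_subtype_val : Continuous fun f : OC R => f.1)
  exact ((continuous_apply b).comp continuous_subtype_val).mul
    ((continuous_apply t).comp continuous_subtype_val)

/-- The collapse of `jmap` to `Dhat`. -/
noncomputable def kmap (b t : R) : Dhat R b t → (R → ℝ) :=
  Quot.lift (Sum.elim (jmap b t) (fun _ => 0)) (by
    rintro _ _ ⟨x, hx, rfl, rfl⟩
    exact jmap_zero hx)

lemma kmap_pt (b t : R) : kmap b t (Dhat.pt R b t) = 0 := rfl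

lemma kmap_val (b t : R) (f : OC R) :
    kmap b t (Quot.mk _ (Sum.inl f)) = jmap b t f := rfl

lemma kmap_continuous (b t : R) : Continuous (kmap b t) :=
  continuous_quot_lift _ ((jmap_continuous b t).sumElim continuous_const)

end Jmap

section Main
variable (P Q : Type) [PartialOrder P] [Fintype P] [BoundedOrder P]
  [PartialOrder Q] [Fintype Q] [BoundedOrder Q]

/-- The comparison map from `Δ̌̂(P×Q)` to `Δ̌̂(P) ∧ Δ̌̂(Q)`. -/
noncomputable def Phi : Dhat (P × Q) ⊥ ⊤ →
    Smash (Dhat P ⊥ ⊤) (Dhat Q ⊥ ⊤) (Dhat.pt P ⊥ ⊤) (Dhat.pt Q ⊥ ⊤) :=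
  Quot.lift (Sum.elim
    (fun f => Quot.mk _ (Quot.mk _ (Sum.inl (marg1 f)), Quot.mk _ (Sum.inl (marg2 f))))
    (fun _ => Smash.pt _ _ _ _)) (by
      rintro _ _ ⟨f, hf, rfl, rfl⟩
      show Quot.mk _ _ = Smash.pt _ _ _ _
      rcases hf with h | h
      · rcases marg_bot f h with h1 | h1
        · exact smash_wedge_eq_pt (Or.inl (Quot.sound ⟨marg1 f, Or.inl h1, rfl, rfl⟩))
        · exact smash_wedge_eq_pt (Or.inr (Quot.sound ⟨marg2 f, Or.inl h1, rfl, rfl⟩))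
      · rcases marg_top f h with h1 | h1
        · exact smash_wedge_eq_pt (Or.inl (Quot.sound ⟨marg1 f, Or.inr h1, rfl, rfl⟩))
        · exact smash_wedge_eq_pt (Or.inr (Quot.sound ⟨marg2 f, Or.inr h1, rfl, rfl⟩)))

lemma Phi_pt : Phi P Q (Dhat.pt (P × Q) ⊥ ⊤) = Smash.pt _ _ _ _ := rfl

lemma Phi_val (f : OC (P × Q)) :
    Phi P Q (Quot.mk _ (Sum.inl f)) =
      Quot.mk _ (Quot.mk _ (Sum.inl (marg1 f)), Quot.mk _ (Sum.inl (marg2 f))) := rfl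

lemma marg1_continuous : Continuous (marg1 : OC (P × Q) → OC P) := by
  exact Continuous.subtype_mk (continuous_pi fun p => continuous_finset_sum univ
    fun q _ => (continuous_apply (p, q)).comp continuous_subtype_val) _

lemma marg2_continuous : Continuous (marg2 : OC (P × Q) → OC Q) := by
  exact Continuous.subtype_mk (continuous_pi fun q => continuous_finset_sum univ
    fun p _ => (continuous_apply (p, q)).comp continuous_subtype_val) _

lemma Phi_continuous : Continuous (Phi P Q) := by
  refine continuous_quot_lift _ (Continuous.sumElim ?_ continuous_const)
  exact continuous_quot_mk.comp
    ((continuous_quot_mk.comp (continuous_inl.comp (marg1_continuous P Q))).prodMk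
      (continuous_quot_mk.comp (continuous_inl.comp (marg2_continuous P Q))))

lemma Phi_surjective : Function.Surjective (Phi P Q) := by
  intro z
  obtain ⟨⟨x, y⟩, rfl⟩ := Quot.exists_rep z
  rcases dhat_cases ⊥ ⊤ x with hx | ⟨u, ⟨hub, hut⟩, rfl⟩
  · subst hx
    refine ⟨Dhat.pt _ _ _, ?_⟩
    rw [Phi_pt]
    refine (smash_wedge_eq_pt ?_).symm
    exact Or.inl rfl
  · rcases dhat_cases ⊥ ⊤ y with hy | ⟨v, ⟨hvb, hvt⟩, rfl⟩
    · subst hy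
      refine ⟨Dhat.pt _ _ _, ?_⟩
      rw [Phi_pt]
      refine (smash_wedge_eq_pt ?_).symm
      exact Or.inr rfl
    · refine ⟨Quot.mk _ (Sum.inl (couple u v)), ?_⟩
      rw [Phi_val, marg1_couple, marg2_couple]
      rfl

lemma Phi_injective : Function.Injective (Phi P Q) := by
  intro a b hab
  rcases dhat_cases ⊥ ⊤ a with ha | ⟨f, ⟨hfb, hft⟩, rfl⟩ <;>
    rcases dhat_cases ⊥ ⊤ b with hb | ⟨g, ⟨hgb, hgt⟩, rfl⟩
  · rw [ha, hb]
  · exfalso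
    subst ha
    rw [Phi_pt, Phi_val] at hab
    rcases smash_mk_eq.mp hab with h | ⟨-, h⟩
    · have h1 : Dhat.pt P ⊥ ⊤ = Quot.mk _ (Sum.inl (marg1 g)) := congrArg Prod.fst h
      exact dhat_val_ne_pt ⊥ ⊤ (marg1_ne_of_ne hgb) (marg1_ne_of_ne hgt) h1.symm
    · rcases h with h | h
      · exact dhat_val_ne_pt ⊥ ⊤ (marg1_ne_of_ne hgb) (marg1_ne_of_ne hgt) h
      · exact dhat_val_ne_pt ⊥ ⊤ (marg2_ne_of_ne hgb) (marg2_ne_of_ne hgt) h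
  · exfalso
    subst hb
    rw [Phi_pt, Phi_val] at hab
    rcases smash_mk_eq.mp hab with h | ⟨h, -⟩
    · have h1 : Quot.mk _ (Sum.inl (marg1 f)) = Dhat.pt P ⊥ ⊤ := congrArg Prod.fst h
      exact dhat_val_ne_pt ⊥ ⊤ (marg1_ne_of_ne hfb) (marg1_ne_of_ne hft) h1
    · rcases h with h | h
      · exact dhat_val_ne_pt ⊥ ⊤ (marg1_ne_of_ne hfb) (marg1_ne_of_ne hft) h
      · exact dhat_val_ne_pt ⊥ ⊤ (marg2_ne_of_ne hfb) (marg2_ne_of_ne hft) h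
  · rw [Phi_val, Phi_val] at hab
    rcases smash_mk_eq.mp hab with h | ⟨h, -⟩
    · have h1 : (Quot.mk _ (Sum.inl (marg1 f)) : Dhat P ⊥ ⊤) = Quot.mk _ (Sum.inl (marg1 g)) :=
        congrArg Prod.fst h
      have h2 : (Quot.mk _ (Sum.inl (marg2 f)) : Dhat Q ⊥ ⊤) = Quot.mk _ (Sum.inl (marg2 g)) :=
        congrArg Prod.snd h
      have e1 : marg1 f = marg1 g := dhat_val_inj ⊥ ⊤ (marg1_ne_of_ne hfb) (marg1_ne_of_ne hft)
        (marg1_ne_of_ne hgb) (marg1_ne_of_ne hgt) h1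
      have e2 : marg2 f = marg2 g := dhat_val_inj ⊥ ⊤ (marg2_ne_of_ne hfb) (marg2_ne_of_ne hft)
        (marg2_ne_of_ne hgb) (marg2_ne_of_ne hgt) h2
      rw [marg_inj e1 e2]
    · exfalso
      rcases h with h | h
      · exact dhat_val_ne_pt ⊥ ⊤ (marg1_ne_of_ne hfb) (marg1_ne_of_ne hft) h
      · exact dhat_val_ne_pt ⊥ ⊤ (marg2_ne_of_ne hfb) (marg2_ne_of_ne hft) h

/-- The test map into a function space, used to establish Hausdorffness of the smash. -/
noncomputable def Kmap : Smash (Dhat P ⊥ ⊤) (Dhat Q ⊥ ⊤) (Dhat.pt P ⊥ ⊤) (Dhat.pt Q ⊥ ⊤) →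
    (P × Q → ℝ) :=
  Quot.lift (fun xy c => kmap ⊥ ⊤ xy.1 c.1 * kmap ⊥ ⊤ xy.2 c.2) (by
    rintro a b ⟨ha, hb⟩
    have key : ∀ s : Dhat P ⊥ ⊤ × Dhat Q ⊥ ⊤,
        (s.1 = Dhat.pt P ⊥ ⊤ ∨ s.2 = Dhat.pt Q ⊥ ⊤) →
        (fun c : P × Q => kmap ⊥ ⊤ s.1 c.1 * kmap ⊥ ⊤ s.2 c.2) = fun _ => 0 := by
      rintro s (h | h) <;> funext c <;> rw [h, kmap_pt] <;> simp
    exact (key a ha).trans (key b hb).symm)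

lemma Kmap_mk (x : Dhat P ⊥ ⊤) (y : Dhat Q ⊥ ⊤) (c : P × Q) :
    Kmap P Q (Quot.mk _ (x, y)) c = kmap ⊥ ⊤ x c.1 * kmap ⊥ ⊤ y c.2 := rfl

lemma Kmap_continuous : Continuous (Kmap P Q) := by
  refine continuous_quot_lift _ (continuous_pi fun c => Continuous.mul ?_ ?_)
  · exact (continuous_apply c.1).comp ((kmap_continuous ⊥ ⊤).comp continuous_fst)
  · exact (continuous_apply c.2).comp ((kmap_continuous ⊥ ⊤).comp continuous_snd)

lemma Kmap_sum (x : Dhat P ⊥ ⊤) (y : Dhat Q ⊥ ⊤) :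
    ∑ c, Kmap P Q (Quot.mk _ (x, y)) c = (∑ p, kmap ⊥ ⊤ x p) * (∑ q, kmap ⊥ ⊤ y q) := by
  rw [Fintype.sum_prod_type]
  rw [Finset.sum_mul_sum]
  rfl

lemma Kmap_injective : Function.Injective (Kmap P Q) := by
  intro z z' h
  obtain ⟨⟨x, y⟩, rfl⟩ := Quot.exists_rep z
  obtain ⟨⟨x', y'⟩, rfl⟩ := Quot.exists_rep z'
  have hsum : ∑ c, Kmap P Q (Quot.mk _ (x, y)) c = ∑ c, Kmap P Q (Quot.mk _ (x', y')) c := by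
    rw [h]
  -- wedge detection
  have hwedge : ∀ (a : Dhat P ⊥ ⊤) (b : Dhat Q ⊥ ⊤),
      (a = Dhat.pt P ⊥ ⊤ ∨ b = Dhat.pt Q ⊥ ⊤) → ∑ c, Kmap P Q (Quot.mk _ (a, b)) c = 0 := by
    rintro a b (rfl | rfl) <;> rw [Kmap_sum] <;> simp [kmap_pt]
  rcases dhat_cases ⊥ ⊤ x with hx | ⟨u, ⟨hub, hut⟩, rfl⟩
  · -- x is the basepoint
    have hz : (Quot.mk _ (x, y) : Smash (Dhat P ⊥ ⊤) (Dhat Q ⊥ ⊤) (Dhat.pt P ⊥ ⊤) (Dhat.pt Q ⊥ ⊤)) = Smash.pt (Dhat P ⊥ ⊤) (Dhat Q ⊥ ⊤) (Dhat.pt P ⊥ ⊤) (Dhat.pt Q ⊥ ⊤) :=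
      smash_wedge_eq_pt (Or.inl hx)
    have h0 : ∑ c, Kmap P Q (Quot.mk _ (x, y)) c = 0 := hwedge x y (Or.inl hx)
    rcases dhat_cases ⊥ ⊤ x' with hx' | ⟨u', ⟨hub', hut'⟩, rfl⟩
    · rw [hz, smash_wedge_eq_pt (Or.inl hx')]
    · rcases dhat_cases ⊥ ⊤ y' with hy' | ⟨v', ⟨hvb', hvt'⟩, rfl⟩
      · rw [hz, smash_wedge_eq_pt (Or.inr hy')]
      · exfalso
        erw [hsum, Kmap_sum] at h0
        simp only [kmap_val, jmap_sum] at h0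
        rcases mul_eq_zero.mp h0 with h' | h'
        · exact (mul_ne_zero hub' hut') h'
        · exact (mul_ne_zero hvb' hvt') h'
  · rcases dhat_cases ⊥ ⊤ y with hy | ⟨v, ⟨hvb, hvt⟩, rfl⟩
    · -- y is the basepoint
      have hz : (Quot.mk _ (Quot.mk _ (Sum.inl u), y) : Smash (Dhat P ⊥ ⊤) (Dhat Q ⊥ ⊤) (Dhat.pt P ⊥ ⊤) (Dhat.pt Q ⊥ ⊤)) = Smash.pt (Dhat P ⊥ ⊤) (Dhat Q ⊥ ⊤) (Dhat.pt P ⊥ ⊤) (Dhat.pt Q ⊥ ⊤) :=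
        smash_wedge_eq_pt (Or.inr hy)
      have h0 : ∑ c, Kmap P Q (Quot.mk _ (Quot.mk _ (Sum.inl u), y)) c = 0 :=
        hwedge _ y (Or.inr hy)
      rcases dhat_cases ⊥ ⊤ x' with hx' | ⟨u', ⟨hub', hut'⟩, rfl⟩
      · rw [hz, smash_wedge_eq_pt (Or.inl hx')]
      · rcases dhat_cases ⊥ ⊤ y' with hy' | ⟨v', ⟨hvb', hvt'⟩, rfl⟩
        · rw [hz, smash_wedge_eq_pt (Or.inr hy')]
        · exfalso
          erw [hsum, Kmap_sum] at h0
          simp only [kmap_val, jmap_sum] at h0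
          rcases mul_eq_zero.mp h0 with h' | h'
          · exact (mul_ne_zero hub' hut') h'
          · exact (mul_ne_zero hvb' hvt') h'
    · -- x, y both nondegenerate
      rcases dhat_cases ⊥ ⊤ x' with hx' | ⟨u', ⟨hub', hut'⟩, rfl⟩
      · exfalso
        have h0 : ∑ c, Kmap P Q (Quot.mk _ (x', y')) c = 0 := hwedge x' y' (Or.inl hx')
        erw [← hsum, Kmap_sum] at h0
        simp only [kmap_val, jmap_sum] at h0
        rcases mul_eq_zero.mp h0 with h' | h'
        · exact (mul_ne_zero hub hut) h'
        · exact (mul_ne_zero hvb hvt) h'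
      · rcases dhat_cases ⊥ ⊤ y' with hy' | ⟨v', ⟨hvb', hvt'⟩, rfl⟩
        · exfalso
          have h0 := hwedge (Quot.mk _ (Sum.inl u')) y' (Or.inr hy')
          erw [← hsum, Kmap_sum] at h0
          simp only [kmap_val, jmap_sum] at h0
          rcases mul_eq_zero.mp h0 with h' | h'
          · exact (mul_ne_zero hub hut) h'
          · exact (mul_ne_zero hvb hvt) h'
        · -- all nondegenerate : recover the representatives
          set su := u.1 ⊥ * u.1 ⊤ with hsu
          set sv := v.1 ⊥ * v.1 ⊤ with hsv
          set su' := u'.1 ⊥ * u'.1 ⊤ with hsu'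
          set sv' := v'.1 ⊥ * v'.1 ⊤ with hsv'
          have hsune : su ≠ 0 := mul_ne_zero hub hut
          have hsvne : sv ≠ 0 := mul_ne_zero hvb hvt
          have hpq : ∀ (p : P) (q : Q),
              jmap ⊥ ⊤ u p * jmap ⊥ ⊤ v q = jmap ⊥ ⊤ u' p * jmap ⊥ ⊤ v' q := by
            intro p q
            have := congrFun h (p, q)
            erw [Kmap_mk, Kmap_mk] at this
            exact this
          have htot : su * sv = su' * sv' := by
            have := hsum
            erw [Kmap_sum, Kmap_sum] at this
            simpa only [kmap_val, jmap_sum] using this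
          have hrow : ∀ p : P, jmap ⊥ ⊤ u p * sv = jmap ⊥ ⊤ u' p * sv' := by
            intro p
            have : ∑ q, jmap ⊥ ⊤ u p * jmap ⊥ ⊤ v q = ∑ q, jmap ⊥ ⊤ u' p * jmap ⊥ ⊤ v' q :=
              Finset.sum_congr rfl fun q _ => hpq p q
            rwa [← Finset.mul_sum, ← Finset.mul_sum, jmap_sum, jmap_sum] at this
          have hcol : ∀ q : Q, su * jmap ⊥ ⊤ v q = su' * jmap ⊥ ⊤ v' q := by
            intro q
            have : ∑ p, jmap ⊥ ⊤ u p * jmap ⊥ ⊤ v q = ∑ p, jmap ⊥ ⊤ u' p * jmap ⊥ ⊤ v' q :=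
              Finset.sum_congr rfl fun p _ => hpq p q
            rwa [← Finset.sum_mul, ← Finset.sum_mul, jmap_sum, jmap_sum] at this
          have hu : u = u' := by
            refine Subtype.ext (funext fun p => ?_)
            have h1 := hrow p
            rw [jmap_apply, jmap_apply, ← hsu, ← hsu'] at h1
            have h2 : (su * sv) * u.1 p = (su' * sv') * u'.1 p := by ring_nf; ring_nf at h1; linarith
            rw [← htot] at h2
            exact mul_left_cancel₀ (mul_ne_zero hsune hsvne) h2
          have hv : v = v' := by
            refine Subtype.ext (funext fun q => ?_)
            have h1 := hcol q
            rw [jmap_apply, jmap_apply, ← hsv, ← hsv'] at h1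
            have h2 : (su * sv) * v.1 q = (su' * sv') * v'.1 q := by ring_nf; ring_nf at h1; linarith
            rw [← htot] at h2
            exact mul_left_cancel₀ (mul_ne_zero hsune hsvne) h2
          rw [hu, hv]

end Main

instance dhat_compactSpace {R : Type} [PartialOrder R] [Fintype R] (b t : R) :
    CompactSpace (Dhat R b t) := by
  constructor
  have h := isCompact_range
    (continuous_quot_mk (r := pcollapseRel (OC R) {f : OC R | f.1 b = 0 ∨ f.1 t = 0}))
  rwa [Set.range_eq_univ.mpr Quot.mk_surjective] at h

/-- Let `P` and `Q` be finite posets each with a largest and a smallest element. Then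
`Δ̌̂(P × Q)` is homeomorphic (as a based space) to the smash product
`Δ̌̂(P) ∧ Δ̌̂(Q)`, where `P × Q` carries the product partial order. -/
theorem dhat_prod_homeo_smash (P Q : Type) [PartialOrder P] [Fintype P] [BoundedOrder P]
    [PartialOrder Q] [Fintype Q] [BoundedOrder Q] :
    ∃ h : Dhat (P × Q) ⊥ ⊤ ≃ₜ
        Smash (Dhat P ⊥ ⊤) (Dhat Q ⊥ ⊤) (Dhat.pt P ⊥ ⊤) (Dhat.pt Q ⊥ ⊤),
      h (Dhat.pt (P × Q) ⊥ ⊤) =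
        Smash.pt (Dhat P ⊥ ⊤) (Dhat Q ⊥ ⊤) (Dhat.pt P ⊥ ⊤) (Dhat.pt Q ⊥ ⊤) := by
  haveI : T2Space (Smash (Dhat P ⊥ ⊤) (Dhat Q ⊥ ⊤) (Dhat.pt P ⊥ ⊤) (Dhat.pt Q ⊥ ⊤)) :=
    T2Space.of_injective_continuous (Kmap_injective P Q) (Kmap_continuous P Q)
  haveI : CompactSpace (Dhat (P × Q) ⊥ ⊤) := dhat_compactSpace _ _
  have hbij : Function.Bijective (Phi P Q) := ⟨Phi_injective P Q, Phi_surjective P Q⟩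
  let e : Dhat (P × Q) ⊥ ⊤ ≃
      Smash (Dhat P ⊥ ⊤) (Dhat Q ⊥ ⊤) (Dhat.pt P ⊥ ⊤) (Dhat.pt Q ⊥ ⊤) :=
    Equiv.ofBijective (Phi P Q) hbij
  have hc : Continuous e := Phi_continuous P Q
  exact ⟨hc.homeoOfEquivCompactToT2, rfl⟩
end

section
/- A Galois connection (adjunction) between two finite posets P and Q induces a homotopy equivalence between their order complexes Δ(P) and Δ(Q). -/
open Finset

/-!
A monotone map `φ : P → Q` induces `Δ(P) → Δ(Q)` by pushing weights forward, functorially in `φ`.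
If `φ ≤ ψ` pointwise, the induced maps are homotopic through a prism: stack the weights of a
chain `x₁ < ⋯ < x_k` end to end along `[0, 1]` and, at level `u`, send the mass lying below `u`
along `φ` and the rest along `ψ`. The support stays a chain because `φ xᵢ ≤ φ xⱼ ≤ ψ xⱼ` for
`i ≤ j`. A Galois connection gives `id ≤ g ∘ f` and `f ∘ g ≤ id`, so `f` and `g` induce mutually
inverse homotopy equivalences.
-/

open Function

section Pushforward

variable {P Q R M : Type*} [Fintype P] [DecidableEq Q] [AddCommMonoid M]

def pushforward (φ : P → Q) (p : P → M) (q : Q) : M :=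
  ∑ x with φ x = q, p x

lemma sum_pushforward [Fintype Q] (φ : P → Q) (p : P → M) :
    ∑ q, pushforward φ p q = ∑ x, p x :=
  sum_fiberwise univ φ p

lemma pushforward_zero (φ : P → Q) : pushforward φ (0 : P → M) = 0 := by
  ext q
  simp [pushforward]

lemma pushforward_id [DecidableEq P] (p : P → M) : pushforward id p = p := by
  ext x
  simp [pushforward, filter_eq']

lemma pushforward_pushforward [Fintype Q] [DecidableEq R] (φ : P → Q) (ψ : Q → R) (p : P → M) :
    pushforward ψ (pushforward φ p) = pushforward (ψ ∘ φ) p := by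
  ext r
  simp only [pushforward, comp_apply]
  rw [← sum_fiberwise_of_maps_to (g := φ) (t := {q | ψ q = r}) (by simp)]
  refine sum_congr rfl fun q hq => sum_congr ?_ fun _ _ => rfl
  ext x
  simp_all

lemma support_pushforward_subset (φ : P → Q) (p : P → M) :
    support (pushforward φ p) ⊆ φ '' support p := by
  intro q hq
  obtain ⟨x, hx, hpx⟩ := exists_ne_zero_of_sum_ne_zero hq
  exact ⟨x, hpx, (mem_filter.1 hx).2⟩

lemma pushforward_nonneg [PartialOrder M] [IsOrderedAddMonoid M] (φ : P → Q) {p : P → M}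
    (hp : 0 ≤ p) : 0 ≤ pushforward φ p :=
  fun _ => sum_nonneg fun x _ => hp x

lemma continuous_pushforward [TopologicalSpace M] [ContinuousAdd M] (φ : P → Q) :
    Continuous (pushforward φ : (P → M) → Q → M) :=
  continuous_pi fun _ => continuous_finsetSum _ fun x _ => continuous_apply x

end Pushforward

section Stacking

variable {P : Type*} [Fintype P] [Preorder P] [DecidableLT P]

def weightLT (p : P → ℝ) (x : P) : ℝ :=
  ∑ y with y < x, p y

/-- Stacking the weights of a chain upwards end to end puts that of `x` on
`[weightLT p x, weightLT p x + p x]`; this is the length of its part below level `u`. -/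
def lowerPart (u : ℝ) (p : P → ℝ) (x : P) : ℝ :=
  min (weightLT p x + p x) u - min (weightLT p x) u

def upperPart (u : ℝ) (p : P → ℝ) : P → ℝ :=
  p - lowerPart u p

variable {p : P → ℝ} {u : ℝ} {x y : P}

lemma weightLT_add_le_sum (hp : 0 ≤ p) {s : Finset P} (hs : ∀ z ≤ x, z ∈ s) :
    weightLT p x + p x ≤ ∑ z ∈ s, p z := by
  classical
  rw [weightLT, add_comm, ← sum_insert (by simp)]
  refine sum_le_sum_of_subset_of_nonneg (fun z hz => hs z ?_) fun z _ _ => hp z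
  simp only [mem_insert, mem_filter, mem_univ, true_and] at hz
  exact hz.elim le_of_eq le_of_lt

lemma lowerPart_nonneg (hp : 0 ≤ p) : 0 ≤ lowerPart u p :=
  fun x => sub_nonneg.2 (min_le_min_right u (le_add_of_nonneg_right (hp x)))

lemma upperPart_nonneg (hp : 0 ≤ p) : 0 ≤ upperPart u p := by
  intro x
  have hpx : 0 ≤ p x := hp x
  simp only [upperPart, lowerPart, Pi.sub_apply, Pi.zero_apply, min_def]
  split_ifs <;> linarith

lemma lowerPart_eq_zero_of_le (hp : 0 ≤ p) (h : u ≤ weightLT p x) : lowerPart u p x = 0 := by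
  rw [lowerPart, min_eq_right h, min_eq_right (h.trans (le_add_of_nonneg_right (hp x))), sub_self]

lemma upperPart_eq_zero_of_le (hp : 0 ≤ p) (h : weightLT p x + p x ≤ u) :
    upperPart u p x = 0 := by
  rw [upperPart, Pi.sub_apply, lowerPart, min_eq_left h,
    min_eq_left ((le_add_of_nonneg_right (hp x)).trans h)]
  ring

lemma lowerPart_zero (hp : 0 ≤ p) : lowerPart 0 p = 0 :=
  funext fun _ => lowerPart_eq_zero_of_le hp (sum_nonneg fun y _ => hp y)

lemma lowerPart_of_sum_le (hp : 0 ≤ p) (hu : ∑ x, p x ≤ u) : lowerPart u p = p := by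
  ext x
  have h := (weightLT_add_le_sum (x := x) hp fun z _ => mem_univ z).trans hu
  rw [lowerPart, min_eq_left h, min_eq_left ((le_add_of_nonneg_right (hp x)).trans h)]
  ring

lemma support_lowerPart_subset : support (lowerPart u p) ⊆ support p := by
  intro x hx hpx
  simp [lowerPart, hpx] at hx

lemma support_upperPart_subset : support (upperPart u p) ⊆ support p := by
  intro x hx hpx
  simp [upperPart, lowerPart, hpx] at hx

lemma not_lt_of_lowerPart_ne_zero_of_upperPart_ne_zero (hp : 0 ≤ p) (hx : lowerPart u p x ≠ 0)
    (hy : upperPart u p y ≠ 0) : ¬ y < x := by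
  intro hyx
  have hxu : weightLT p x < u := not_le.1 fun h => hx (lowerPart_eq_zero_of_le hp h)
  have hyu : u < weightLT p y + p y := not_le.1 fun h => hy (upperPart_eq_zero_of_le hp h)
  have hyx' : weightLT p y + p y ≤ weightLT p x :=
    weightLT_add_le_sum hp fun z hz => mem_filter.2 ⟨mem_univ z, hz.trans_lt hyx⟩
  linarith

lemma continuous_lowerPart : Continuous fun up : ℝ × (P → ℝ) => lowerPart up.1 up.2 := by
  unfold lowerPart weightLT
  fun_prop

end Stacking

section Prism

variable {P Q : Type*} [Fintype P] [Preorder P] [DecidableLT P] [DecidableEq Q]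

def prism (φ ψ : P → Q) (u : ℝ) (p : P → ℝ) : Q → ℝ :=
  pushforward φ (lowerPart u p) + pushforward ψ (upperPart u p)

variable {p : P → ℝ}

lemma prism_nonneg (φ ψ : P → Q) (u : ℝ) (hp : 0 ≤ p) : 0 ≤ prism φ ψ u p :=
  add_nonneg (pushforward_nonneg φ (lowerPart_nonneg hp))
    (pushforward_nonneg ψ (upperPart_nonneg hp))

lemma sum_prism [Fintype Q] (φ ψ : P → Q) (u : ℝ) (p : P → ℝ) :
    ∑ q, prism φ ψ u p q = ∑ x, p x := by
  simp only [prism, Pi.add_apply, sum_add_distrib, sum_pushforward, upperPart, Pi.sub_apply,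
    sum_sub_distrib, add_sub_cancel]

lemma prism_zero (φ ψ : P → Q) (hp : 0 ≤ p) : prism φ ψ 0 p = pushforward ψ p := by
  simp [prism, upperPart, lowerPart_zero hp, pushforward_zero]

lemma prism_one (φ ψ : P → Q) (hp : 0 ≤ p) (hs : ∑ x, p x = 1) :
    prism φ ψ 1 p = pushforward φ p := by
  simp [prism, upperPart, lowerPart_of_sum_le hp hs.le, pushforward_zero]

lemma continuous_prism (φ ψ : P → Q) : Continuous fun up : ℝ × (P → ℝ) => prism φ ψ up.1 up.2 :=
  ((continuous_pushforward φ).comp continuous_lowerPart).add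
    ((continuous_pushforward ψ).comp (continuous_snd.sub continuous_lowerPart))

lemma isChain_support_prism [Preorder Q] {φ ψ : P →o Q} (hφψ : φ ≤ ψ) (u : ℝ) (hp : 0 ≤ p)
    (hc : IsChain (· ≤ ·) (support p)) : IsChain (· ≤ ·) (support (prism φ ψ u p)) := by
  refine (isChain_union.2 ⟨φ.monotone.isChain_image (hc.mono support_lowerPart_subset),
    ψ.monotone.isChain_image (hc.mono support_upperPart_subset), ?_⟩).mono
    ((support_add _ _).trans (Set.union_subset_union (support_pushforward_subset _ _)
      (support_pushforward_subset _ _)))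
  rintro _ ⟨x, hx, rfl⟩ _ ⟨y, hy, rfl⟩ -
  have hxy : x ≤ y := by
    by_contra hxy
    have hyx : y ≤ x :=
      (hc.total (support_lowerPart_subset hx) (support_upperPart_subset hy)).resolve_left hxy
    exact not_lt_of_lowerPart_ne_zero_of_upperPart_ne_zero hp hx hy (lt_of_le_not_ge hyx hxy)
  exact .inl ((φ.monotone hxy).trans (hφψ y))

end Prism

namespace OC

variable {P Q R : Type} [PartialOrder P] [Fintype P] [PartialOrder Q] [Fintype Q] [DecidableEq Q]

def map (φ : P →o Q) : C(OC P, OC Q) where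
  toFun p := ⟨pushforward φ p.1, pushforward_nonneg (M := ℝ) φ p.2.1,
    (sum_pushforward φ p.1).trans p.2.2.1,
    (φ.monotone.isChain_image p.2.2.2).mono (support_pushforward_subset φ p.1)⟩
  continuous_toFun := ((continuous_pushforward φ).comp continuous_subtype_val).subtype_mk _

lemma map_comp [PartialOrder R] [Fintype R] [DecidableEq R] (φ : P →o Q) (ψ : Q →o R) :
    map (ψ.comp φ) = (map ψ).comp (map φ) :=
  ContinuousMap.ext fun p => Subtype.ext (pushforward_pushforward φ ψ p.1).symm

lemma map_id [DecidableEq P] : map (OrderHom.id : P →o P) = ContinuousMap.id (OC P) :=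
  ContinuousMap.ext fun p => Subtype.ext (pushforward_id p.1)

def prismHomotopy [DecidableLT P] {φ ψ : P →o Q} (hφψ : φ ≤ ψ) :
    (map ψ).Homotopy (map φ) where
  toFun tp := ⟨prism φ ψ tp.1 tp.2.1, prism_nonneg φ ψ _ tp.2.2.1,
    (sum_prism φ ψ _ _).trans tp.2.2.2.1, isChain_support_prism hφψ _ tp.2.2.1 tp.2.2.2.2⟩
  continuous_toFun := ((continuous_prism φ ψ).comp
    ((continuous_subtype_val.comp continuous_fst).prodMk
      (continuous_subtype_val.comp continuous_snd))).subtype_mk _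
  map_zero_left p := Subtype.ext (prism_zero φ ψ p.2.1)
  map_one_left p := Subtype.ext (prism_one φ ψ p.2.1 p.2.2.1)

lemma map_homotopic_of_le {φ ψ : P →o Q} (hφψ : φ ≤ ψ) : (map φ).Homotopic (map ψ) := by
  classical
  exact ⟨(prismHomotopy hφψ).symm⟩

end OC

theorem galoisConnection_homotopyEquiv_orderComplex_general
    (P Q : Type) [PartialOrder P] [Fintype P] [PartialOrder Q] [Fintype Q]
    (f : P → Q) (g : Q → P)
    (h : GaloisConnection f g) :
    Nonempty (ContinuousMap.HomotopyEquiv (OC P) (OC Q)) := by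
  classical
  let F : P →o Q := ⟨f, h.monotone_l⟩
  let G : Q →o P := ⟨g, h.monotone_u⟩
  refine ⟨⟨OC.map F, OC.map G, ?_, ?_⟩⟩
  · rw [← OC.map_comp, ← OC.map_id]
    exact (OC.map_homotopic_of_le fun x => h.le_u_l x).symm
  · rw [← OC.map_comp, ← OC.map_id]
    exact OC.map_homotopic_of_le fun y => h.l_u_le y

/-- A Galois connection (adjunction) between two finite posets `P` and `Q`, given by a
pair of order-preserving maps `f : P → Q` and `g : Q → P` with `f x ≤ y ↔ x ≤ g y`,
induces a homotopy equivalence between their order complexes `Δ(P)` and `Δ(Q)`. -/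
theorem galoisConnection_homotopyEquiv_orderComplex
    (P Q : Type) [PartialOrder P] [Fintype P] [PartialOrder Q] [Fintype Q]
    (f : P → Q) (g : Q → P) (hf : Monotone f) (hg : Monotone g)
    (h : GaloisConnection f g) :
    Nonempty (ContinuousMap.HomotopyEquiv (OC P) (OC Q)) :=
  galoisConnection_homotopyEquiv_orderComplex_general P Q f g h
end

section
/- Over a field of characteristic zero, the trivial representation of S_n occurs in the arity-n component Lie(n) of the Lie operad only for n = 1, and the sign representation occurs only for n = 1 and n = 2 (with multiplicity one in each case, where Lie(1) ≅ triv and Lie(2) ≅ sgn). -/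
open scoped Module

/-- The right-normed Lie word `[x_{a₁},[x_{a₂},[...,x_{a_r}]]]` in the free Lie
algebra. -/
noncomputable def lieWord (k : Type) [Field k] (n : ℕ) :
    List (Fin n) → FreeLieAlgebra k (Fin n)
  | [] => 0
  | [a] => FreeLieAlgebra.of k a
  | a :: (b :: t) => ⁅FreeLieAlgebra.of k a, lieWord k n (b :: t)⁆

/-- The arity-`n` component `Lie(n)` of the Lie operad over `k`: the multilinear part
of the free Lie algebra on `n` generators, spanned by the right-normed Lie words on
all permutations of the generators. -/
noncomputable def LieN (k : Type) [Field k] (n : ℕ) :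
    Submodule k (FreeLieAlgebra k (Fin n)) :=
  Submodule.span k
    {v | ∃ σ : Equiv.Perm (Fin n), v = lieWord k n ((List.finRange n).map σ)}

/-- The action of a permutation `σ ∈ S_n` on the free Lie algebra by relabelling the
generators. -/
noncomputable def relabel (k : Type) [Field k] (n : ℕ) (σ : Equiv.Perm (Fin n)) :
    FreeLieAlgebra k (Fin n) →ₗ[k] FreeLieAlgebra k (Fin n) :=
  (FreeLieAlgebra.lift k (fun i => FreeLieAlgebra.of k (σ i))).toLinearMap

/-- The trivial-isotypic part (the `S_n`-invariants) of `Lie(n)`. -/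
noncomputable def trivPart (k : Type) [Field k] (n : ℕ) :
    Submodule k (FreeLieAlgebra k (Fin n)) :=
  LieN k n ⊓ ⨅ σ : Equiv.Perm (Fin n),
    LinearMap.ker (relabel k n σ - LinearMap.id)

/-- The sign-isotypic part of `Lie(n)`: elements on which each `σ ∈ S_n` acts by
`sign σ`. -/
noncomputable def signPart (k : Type) [Field k] (n : ℕ) :
    Submodule k (FreeLieAlgebra k (Fin n)) :=
  LieN k n ⊓ ⨅ σ : Equiv.Perm (Fin n),
    LinearMap.ker (relabel k n σ - ((Equiv.Perm.sign σ : ℤ) : k) • LinearMap.id)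


/-!
`Lie(n)` is the cyclic `S_n`-module generated by the word `w = [x₁,[x₂,[…,x_n]]]`. If `v ∈ Lie(n)`
transforms by a character `χ`, the twisted symmetrizer `∑_σ χ(σ)⁻¹ σ` multiplies `v` by `n!` and
kills every `σ w`, because `∑_σ χ(σ)⁻¹ σ w = 0`: for `χ = 1` and `n ≥ 2` the terms cancel in pairs
under the transposition of the last two letters (antisymmetry), and for `χ = sign` and `n ≥ 3`
they cancel along the orbits of the 3-cycle of the last three letters (Jacobi). In arities 1 and 2
the word `w` is itself a nonzero `χ`-eigenvector, so `Lie(n) = k w`.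
-/

open Submodule

namespace Representation

variable {k G V : Type*} [Field k] [Group G] [AddCommGroup V] [Module k V]
  (ρ : Representation k G V)

theorem eq_zero_of_mem_span_orbit_of_sum_eq_zero [Fintype G] (χ : G →* k)
    (hG : (Fintype.card G : k) ≠ 0) {x v : V} (hx : ∑ g, χ g⁻¹ • ρ g x = 0)
    (hv : v ∈ span k (Set.range fun g => ρ g x)) (hvχ : ∀ g, ρ g v = χ g • v) : v = 0 := by
  set T : V →ₗ[k] V := ∑ g, χ g⁻¹ • ρ g
  have hT_orbit : ∀ h, T (ρ h x) = 0 := fun h => by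
    calc T (ρ h x) = ∑ g, χ g⁻¹ • ρ (g * h) x := by
          simp only [T, LinearMap.sum_apply, LinearMap.smul_apply, map_mul, Module.End.mul_apply]
      _ = ∑ g, χ (g * h⁻¹)⁻¹ • ρ (g * h⁻¹ * h) x := (Equiv.sum_comp (Equiv.mulRight h⁻¹) _).symm
      _ = χ h • ∑ g, χ g⁻¹ • ρ g x := by
          simp only [mul_inv_rev, inv_inv, inv_mul_cancel_right, map_mul, mul_smul,
            Finset.smul_sum]
      _ = 0 := by rw [hx, smul_zero]
  have hTv : T v = (Fintype.card G : k) • v := by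
    simp only [T, LinearMap.sum_apply, LinearMap.smul_apply, hvχ, smul_smul, ← map_mul,
      inv_mul_cancel, map_one, one_smul, Finset.sum_const, Finset.card_univ, Nat.cast_smul_eq_nsmul]
  have hspan : span k (Set.range fun g => ρ g x) ≤ LinearMap.ker T :=
    span_le.2 <| Set.range_subset_iff.2 hT_orbit
  have : (Fintype.card G : k) • v = 0 := hTv ▸ hspan hv
  exact (smul_eq_zero.1 this).resolve_left hG

variable {χ : G → k} {x : V}

theorem span_orbit_eq_span_singleton (hx : ∀ g, ρ g x = χ g • x) :
    span k (Set.range fun g => ρ g x) = k ∙ x := by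
  refine le_antisymm (span_le.2 <| Set.range_subset_iff.2 fun g => ?_) ?_
  · rw [hx]; exact smul_mem _ _ (mem_span_singleton_self x)
  · rw [span_singleton_le_iff_mem]
    exact subset_span ⟨1, by simp⟩

theorem apply_eq_smul_of_mem_span_orbit (hx : ∀ g, ρ g x = χ g • x) {v : V}
    (hv : v ∈ span k (Set.range fun g => ρ g x)) (g : G) : ρ g v = χ g • v := by
  rw [span_orbit_eq_span_singleton ρ hx, mem_span_singleton] at hv
  obtain ⟨c, rfl⟩ := hv
  rw [map_smul, hx, smul_comm]

end Representation

namespace FreeLieAlgebra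

attribute [local instance] LieRing.ofAssociativeRing

variable {R X : Type*} [CommRing R] [Nontrivial R]

theorem of_ne_zero (a : X) : of R a ≠ 0 := by
  intro h
  have := congrArg (lift R fun _ : X => Matrix.single (0 : Fin 2) (0 : Fin 2) (1 : R)) h
  simpa using congrFun (congrFun this 0) 0

theorem lie_of_of_ne_zero {a b : X} (hab : a ≠ b) : ⁅of R a, of R b⁆ ≠ 0 := by
  classical
  intro h
  -- in `gl₂`, `⁅E₀₀, E₀₁⁆ = E₀₁`
  have := congrArg
    (lift R fun x : X => Matrix.single (0 : Fin 2) (if x = a then 0 else 1 : Fin 2) (1 : R)) h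
  simpa [hab.symm, Ring.lie_def] using congrFun (congrFun this 0) 1

end FreeLieAlgebra

theorem List.exists_eq_append_of_le_length {α : Type*} {l : List α} {m : ℕ}
    (h : m ≤ l.length) : ∃ L R, l = L ++ R ∧ R.length = m :=
  ⟨l.take (l.length - m), l.drop (l.length - m), (List.take_append_drop _ _).symm,
    by simp only [List.length_drop]; omega⟩

open Equiv

theorem List.map_perm_mul_append {α : Type*} {σ τ : Equiv.Perm α} {L : List α}
    (hτ : ∀ x ∈ L, τ x = x) (t : List α) : (L ++ t).map (σ * τ) = (L ++ t.map τ).map σ := by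
  rw [Perm.coe_mul, ← List.map_map, List.map_append, List.map_congr_left hτ, List.map_id']

section LieWord

variable (k : Type) [Field k] {n : ℕ}

theorem lieWord_cons_of_ne_nil (a : Fin n) {t : List (Fin n)} (ht : t ≠ []) :
    lieWord k n (a :: t) = ⁅FreeLieAlgebra.of k a, lieWord k n t⁆ := by
  obtain ⟨b, t, rfl⟩ := List.exists_cons_of_ne_nil ht
  rw [lieWord]

theorem lieWord_append_swap (a b : Fin n) :
    ∀ L : List (Fin n), lieWord k n (L ++ [b, a]) = -lieWord k n (L ++ [a, b])
  | [] => (lie_skew _ _).symm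
  | c :: L => by
    rw [List.cons_append, List.cons_append, lieWord_cons_of_ne_nil k c (by simp),
      lieWord_cons_of_ne_nil k c (by simp), lieWord_append_swap a b L, lie_neg]

theorem lieWord_append_jacobi (a b c : Fin n) :
    ∀ L : List (Fin n), lieWord k n (L ++ [a, b, c]) + lieWord k n (L ++ [b, c, a])
      + lieWord k n (L ++ [c, a, b]) = 0
  | [] => lie_jacobi _ _ _
  | d :: L => by
    rw [List.cons_append, List.cons_append, List.cons_append,
      lieWord_cons_of_ne_nil k d (by simp), lieWord_cons_of_ne_nil k d (by simp),
      lieWord_cons_of_ne_nil k d (by simp), ← lie_add, ← lie_add,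
      lieWord_append_jacobi a b c L, lie_zero]

theorem relabel_of (σ : Perm (Fin n)) (a : Fin n) :
    relabel k n σ (FreeLieAlgebra.of k a) = FreeLieAlgebra.of k (σ a) :=
  FreeLieAlgebra.lift_of_apply _ a

theorem relabel_lie (σ : Perm (Fin n)) (x y : FreeLieAlgebra k (Fin n)) :
    relabel k n σ ⁅x, y⁆ = ⁅relabel k n σ x, relabel k n σ y⁆ :=
  LieHom.map_lie _ x y

theorem relabel_lieWord (σ : Perm (Fin n)) :
    ∀ l : List (Fin n), relabel k n σ (lieWord k n l) = lieWord k n (l.map σ)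
  | [] => map_zero _
  | [a] => relabel_of k σ a
  | a :: b :: t => by
    rw [lieWord, List.map_cons, List.map_cons, lieWord, relabel_lie, relabel_of,
      ← List.map_cons, relabel_lieWord σ (b :: t)]

end LieWord

noncomputable def relabelRep (k : Type) [Field k] (n : ℕ) :
    Representation k (Perm (Fin n)) (FreeLieAlgebra k (Fin n)) where
  toFun := relabel k n
  map_one' := by
    have : FreeLieAlgebra.lift k (fun i => FreeLieAlgebra.of k ((1 : Perm (Fin n)) i)) =
        LieHom.id := FreeLieAlgebra.hom_ext fun i => by simp
    simp only [relabel, this]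
    rfl
  map_mul' σ τ := by
    have : FreeLieAlgebra.lift k (fun i => FreeLieAlgebra.of k ((σ * τ) i)) =
        (FreeLieAlgebra.lift k fun i => FreeLieAlgebra.of k (σ i)).comp
          (FreeLieAlgebra.lift k fun i => FreeLieAlgebra.of k (τ i)) :=
      FreeLieAlgebra.hom_ext fun i => by simp
    simp only [relabel, this]
    rfl

theorem relabelRep_apply (k : Type) [Field k] (n : ℕ) (σ : Perm (Fin n)) :
    relabelRep k n σ = relabel k n σ := rfl

theorem lieN_eq_span_orbit (k : Type) [Field k] (n : ℕ) :
    LieN k n = Submodule.span k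
      (Set.range fun σ => relabelRep k n σ (lieWord k n (List.finRange n))) := by
  simp only [LieN, relabelRep_apply, relabel_lieWord, Set.range, eq_comm]

section Symmetrization

variable (k : Type) [Field k] {n : ℕ} {l : List (Fin n)}

theorem sum_lieWord_map_perm_eq_zero (hl : l.Nodup) (hlen : 2 ≤ l.length) :
    ∑ σ : Perm (Fin n), lieWord k n (l.map σ) = 0 := by
  obtain ⟨L, R, rfl, hR⟩ := List.exists_eq_append_of_le_length hlen
  obtain ⟨a, b, rfl⟩ := List.length_eq_two.1 hR
  obtain ⟨-, hab, hL⟩ : L.Nodup ∧ a ≠ b ∧ ∀ x ∈ L, x ≠ a ∧ x ≠ b := by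
    simpa [List.nodup_append] using hl
  have hfix : ∀ x ∈ L, swap a b x = x := fun x hx =>
    swap_apply_of_ne_of_ne (hL x hx).1 (hL x hx).2
  refine Finset.sum_ninvolution (· * swap a b) (fun σ => ?_) (fun σ _ => ?_)
    (fun _ => Finset.mem_univ _) (fun σ => by simp [mul_assoc])
  · simp only [List.map_perm_mul_append hfix, List.map_cons, List.map_nil, swap_apply_left,
      swap_apply_right, List.map_append]
    rw [lieWord_append_swap, neg_add_cancel]
  · simpa [mul_ne_left] using hab

theorem sum_sign_smul_lieWord_map_perm_eq_zero [CharZero k] (hl : l.Nodup) (hlen : 3 ≤ l.length) :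
    ∑ σ : Perm (Fin n), ((Perm.sign σ : ℤ) : k) • lieWord k n (l.map σ) = 0 := by
  obtain ⟨L, R, rfl, hR⟩ := List.exists_eq_append_of_le_length hlen
  obtain ⟨a, b, c, rfl⟩ := List.length_eq_three.1 hR
  obtain ⟨-, ⟨⟨hab, hac⟩, hbc⟩, hL⟩ : L.Nodup ∧ ((a ≠ b ∧ a ≠ c) ∧ b ≠ c) ∧
      ∀ x ∈ L, x ≠ a ∧ x ≠ b ∧ x ≠ c := by
    simpa [List.nodup_append] using hl
  set τ : Perm (Fin n) := swap a c * swap a b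
  have hτ : τ a = b ∧ τ b = c ∧ τ c = a := by
    simp [τ, swap_apply_of_ne_of_ne hab.symm hbc, swap_apply_of_ne_of_ne hac.symm hbc.symm]
  have hfix : ∀ x ∈ L, τ x = x := fun x hx => by
    obtain ⟨hxa, hxb, hxc⟩ := hL x hx
    simp [τ, swap_apply_of_ne_of_ne hxa hxb, swap_apply_of_ne_of_ne hxa hxc]
  have hsign : Perm.sign τ = 1 := by simp [τ, Perm.sign_swap hab, Perm.sign_swap hac]
  set f : Perm (Fin n) → FreeLieAlgebra k (Fin n) :=
    fun σ => ((Perm.sign σ : ℤ) : k) • lieWord k n ((L ++ [a, b, c]).map σ)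
  have hcycle : ∀ σ, f σ + f (σ * τ) + f (σ * τ * τ) = 0 := fun σ => by
    simp only [f, List.map_perm_mul_append hfix, List.map_cons, List.map_nil, hτ, Perm.sign_mul,
      hsign, mul_one, ← smul_add]
    simp only [List.map_append, List.map_cons, List.map_nil, lieWord_append_jacobi, smul_zero]
  have hshift : ∀ g : Perm (Fin n) → FreeLieAlgebra k (Fin n), ∑ σ, g (σ * τ) = ∑ σ, g σ :=
    fun g => Fintype.sum_equiv (Equiv.mulRight τ) _ _ fun _ => rfl
  have hsum3 : (3 : k) • ∑ σ, f σ = 0 := by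
    calc (3 : k) • ∑ σ, f σ = ∑ σ, f σ + ∑ σ, f (σ * τ) + ∑ σ, f (σ * τ * τ) := by
          rw [hshift fun σ => f (σ * τ), hshift f,
            show (3 : k) = 1 + 1 + 1 by norm_num, add_smul, add_smul, one_smul]
      _ = 0 := by simp only [← Finset.sum_add_distrib, hcycle, Finset.sum_const_zero]
  exact (smul_eq_zero.1 hsum3).resolve_left three_ne_zero

end Symmetrization

noncomputable def signChar (k : Type) [Field k] (n : ℕ) : Perm (Fin n) →* k :=
  (Int.castRingHom k).toMonoidHom.comp ((Units.coeHom ℤ).comp Perm.sign)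

theorem signChar_apply (k : Type) [Field k] (n : ℕ) (σ : Perm (Fin n)) :
    signChar k n σ = ((Perm.sign σ : ℤ) : k) := rfl

section Isotypic

variable (k : Type) [Field k] {n : ℕ}

theorem mem_trivPart {v : FreeLieAlgebra k (Fin n)} :
    v ∈ trivPart k n ↔ v ∈ LieN k n ∧ ∀ σ, relabelRep k n σ v = (1 : Perm (Fin n) →* k) σ • v := by
  simp [trivPart, Submodule.mem_iInf, sub_eq_zero, relabelRep_apply]

theorem mem_signPart {v : FreeLieAlgebra k (Fin n)} :
    v ∈ signPart k n ↔ v ∈ LieN k n ∧ ∀ σ, relabelRep k n σ v = signChar k n σ • v := by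
  simp [signPart, Submodule.mem_iInf, sub_eq_zero, relabelRep_apply, signChar_apply]

theorem trivPart_eq_bot [CharZero k] (hn : 2 ≤ n) : trivPart k n = ⊥ := by
  refine (Submodule.eq_bot_iff _).2 fun v hv => ?_
  obtain ⟨hvL, hvχ⟩ := (mem_trivPart k).1 hv
  refine (relabelRep k n).eq_zero_of_mem_span_orbit_of_sum_eq_zero 1
    (Nat.cast_ne_zero.2 Fintype.card_ne_zero) ?_ (lieN_eq_span_orbit k n ▸ hvL) hvχ
  simpa [relabelRep_apply, relabel_lieWord] using
    sum_lieWord_map_perm_eq_zero k (List.nodup_finRange n) (by simpa using hn)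

theorem signPart_eq_bot [CharZero k] (hn : 3 ≤ n) : signPart k n = ⊥ := by
  refine (Submodule.eq_bot_iff _).2 fun v hv => ?_
  obtain ⟨hvL, hvχ⟩ := (mem_signPart k).1 hv
  refine (relabelRep k n).eq_zero_of_mem_span_orbit_of_sum_eq_zero (signChar k n)
    (Nat.cast_ne_zero.2 Fintype.card_ne_zero) ?_ (lieN_eq_span_orbit k n ▸ hvL) hvχ
  simpa [relabelRep_apply, relabel_lieWord, signChar_apply] using
    sum_sign_smul_lieWord_map_perm_eq_zero k (List.nodup_finRange n) (by simpa using hn)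

theorem relabelRep_apply_eq_smul_of_mem_lieN {χ : Perm (Fin n) → k}
    (hχ : ∀ σ, relabelRep k n σ (lieWord k n (List.finRange n)) =
      χ σ • lieWord k n (List.finRange n))
    {v : FreeLieAlgebra k (Fin n)} (hv : v ∈ LieN k n) (σ : Perm (Fin n)) :
    relabelRep k n σ v = χ σ • v :=
  (relabelRep k n).apply_eq_smul_of_mem_span_orbit hχ (lieN_eq_span_orbit k n ▸ hv) σ

theorem finrank_lieN_eq_one {χ : Perm (Fin n) → k}
    (hχ : ∀ σ, relabelRep k n σ (lieWord k n (List.finRange n)) =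
      χ σ • lieWord k n (List.finRange n))
    (hne : lieWord k n (List.finRange n) ≠ 0) : Module.finrank k (LieN k n) = 1 := by
  rw [lieN_eq_span_orbit, (relabelRep k n).span_orbit_eq_span_singleton hχ,
    finrank_span_singleton hne]

end Isotypic

section LowArity

variable (k : Type) [Field k]

theorem relabelRep_fin_one (σ : Perm (Fin 1)) (x : FreeLieAlgebra k (Fin 1)) :
    relabelRep k 1 σ x = x := by
  rw [Subsingleton.elim σ 1, map_one, Module.End.one_apply]

theorem relabelRep_fin_two_lieWord (σ : Perm (Fin 2)) :
    relabelRep k 2 σ (lieWord k 2 (List.finRange 2)) =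
      signChar k 2 σ • lieWord k 2 (List.finRange 2) := by
  have hfin : List.finRange 2 = [0, 1] := rfl
  obtain rfl | rfl : σ = 1 ∨ σ = swap 0 1 := by revert σ; decide
  · rw [map_one, Module.End.one_apply, map_one, one_smul]
  · rw [relabelRep_apply, relabel_lieWord, hfin, signChar_apply, Perm.sign_swap (by decide)]
    simpa using lieWord_append_swap k (0 : Fin 2) 1 []

theorem trivPart_one : trivPart k 1 = LieN k 1 :=
  le_antisymm inf_le_left fun _ hv => (mem_trivPart k).2
    ⟨hv, fun σ => by rw [relabelRep_fin_one, Subsingleton.elim σ 1, map_one, one_smul]⟩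

theorem signPart_one : signPart k 1 = LieN k 1 :=
  le_antisymm inf_le_left fun _ hv => (mem_signPart k).2
    ⟨hv, fun σ => by rw [relabelRep_fin_one, Subsingleton.elim σ 1, map_one, one_smul]⟩

theorem signPart_two : signPart k 2 = LieN k 2 :=
  le_antisymm inf_le_left fun _ hv => (mem_signPart k).2
    ⟨hv, relabelRep_apply_eq_smul_of_mem_lieN k (relabelRep_fin_two_lieWord k) hv⟩

theorem finrank_lieN_one : Module.finrank k (LieN k 1) = 1 :=
  finrank_lieN_eq_one k (χ := 1) (fun σ => by rw [relabelRep_fin_one, Pi.one_apply, one_smul])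
    (FreeLieAlgebra.of_ne_zero 0)

theorem finrank_lieN_two : Module.finrank k (LieN k 2) = 1 :=
  finrank_lieN_eq_one k (relabelRep_fin_two_lieWord k)
    (FreeLieAlgebra.lie_of_of_ne_zero (by decide : (0 : Fin 2) ≠ 1))

end LowArity

/-- Over a field of characteristic zero, the trivial representation of `S_n` occurs in
`Lie(n)` only for `n = 1`, and the sign representation occurs only for `n = 1` and
`n = 2`, with multiplicity one in each case (where `Lie(1) ≅ triv` and
`Lie(2) ≅ sgn`). -/
theorem lie_operad_triv_and_sign_multiplicities (k : Type) [Field k] [CharZero k] :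
    (∀ n, 2 ≤ n → trivPart k n = ⊥) ∧
    trivPart k 1 = LieN k 1 ∧
    Module.finrank k (LieN k 1) = 1 ∧
    (∀ n, 3 ≤ n → signPart k n = ⊥) ∧
    signPart k 1 = LieN k 1 ∧
    signPart k 2 = LieN k 2 ∧
    Module.finrank k (LieN k 2) = 1 :=
  ⟨fun _ => trivPart_eq_bot k, trivPart_one k, finrank_lieN_one k,
    fun _ => signPart_eq_bot k, signPart_one k, signPart_two k, finrank_lieN_two k⟩
end

section
/- Let U ⊆ Π_n be the upwards closed set of partitions of {1,...,n} having at least one block of size ≥ k (for 2 ≤ k ≤ n), and let J_{U₀} be the set of joins of atoms of U together with the bottom element 0̂. Then J_{U₀} equals the subposet Π_{(k,1^{n−k})} of Π_n consisting of all partitions each of whose blocks is either a singleton or has size ≥ k; moreover, for T ∈ J_{U₀} with blocks of sizes t₁,...,t_ℓ, the lower interval J_{U₀}^{≤T} is isomorphic as a poset to the product ∏_{i=1}^ℓ Π_{(k,1^{t_i−k})}. -/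
/-!
The atoms of `U` are the partitions with a single non-singleton block, of exactly `k` elements.
Splitting the blocks of size `< k` of a partition into singletons is monotone, and its fixed
points are the partitions of `Π_{(k,1^{n-k})}`; hence these are closed under joins. Conversely,
if `x ~ y`, `x ≠ y` in such a partition, a `k`-subset of their block containing both gives an
atom below it relating them. A partition below `T` is the same as a family of partitions of the
blocks of `T`, and restriction to a block of `T` preserves block sizes.
-/

/-- The size of the block of `x` in the partition (equivalence relation) `r`. -/
noncomputable def blockSize {n : ℕ} (r : Setoid (Fin n)) (x : Fin n) : ℕ :=
  Nat.card {y : Fin n // r.r x y}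

/-- The set of partitions of `{1,...,n}` having at least one block of size `≥ k`:
an upwards closed subset `U` of the partition lattice `Π_n`. -/
def bigBlock (n k : ℕ) : Set (Setoid (Fin n)) :=
  {r | ∃ x : Fin n, k ≤ blockSize r x}

/-- The subposet `Π_{(k,1^{m-k})}` of the partition lattice of a finite type `α`:
partitions each of whose blocks is either a singleton or has size `≥ k`. -/
def kEqualsPartitions (α : Type) (k : ℕ) : Set (Setoid α) :=
  {r | ∀ x : α, Nat.card {y : α // r.r x y} = 1 ∨ k ≤ Nat.card {y : α // r.r x y}}

/-- An atom of the upwards closed set `U ⊆ Π_n`: a minimal element of `U`. -/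
def isAtomOf {n : ℕ} (U : Set (Setoid (Fin n))) (a : Setoid (Fin n)) : Prop :=
  a ∈ U ∧ ∀ b ∈ U, b ≤ a → b = a

/-- `J_{U₀}`: the set of all joins of sets of atoms of `U` (the empty join being the
bottom element `0̂`, the partition into singletons). -/
def joinClosure {n : ℕ} (U : Set (Setoid (Fin n))) : Set (Setoid (Fin n)) :=
  {r | ∃ A : Set (Setoid (Fin n)), (∀ a ∈ A, isAtomOf U a) ∧ r = sSup A}

namespace Setoid

section General

variable {α : Type*}

noncomputable def blockCard (r : Setoid α) (x : α) : ℕ :=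
  Nat.card {y // r x y}

lemma blockCard_eq_ncard (r : Setoid α) (x : α) : r.blockCard x = {y | r x y}.ncard :=
  Nat.card_coe_set_eq _

lemma blockCard_eq_of_rel {r : Setoid α} {x y : α} (h : r x y) :
    r.blockCard x = r.blockCard y :=
  Nat.card_congr <| Equiv.subtypeEquivRight fun _ => ⟨r.trans (r.symm h), r.trans h⟩

lemma blockCard_mono [Finite α] {r s : Setoid α} (h : r ≤ s) (x : α) :
    r.blockCard x ≤ s.blockCard x :=
  Nat.card_mono (Set.toFinite _) fun _ hy => h hy

lemma blockCard_eq_one_iff {r : Setoid α} {x : α} :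
    r.blockCard x = 1 ↔ ∀ y, r x y → y = x := by
  rw [blockCard, Nat.card_eq_one_iff_unique]
  refine ⟨fun ⟨h, _⟩ y hy => congrArg Subtype.val (h.elim ⟨y, hy⟩ ⟨x, r.refl x⟩),
    fun h => ⟨⟨fun a b => Subtype.ext ((h a a.2).trans (h b b.2).symm)⟩, ⟨⟨x, r.refl x⟩⟩⟩⟩

def splitSmallBlocks (r : Setoid α) (k : ℕ) : Setoid α where
  r x y := x = y ∨ r x y ∧ k ≤ r.blockCard x
  iseqv.refl _ := Or.inl rfl
  iseqv.symm := by
    rintro x y (rfl | ⟨h, hk⟩)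
    exacts [Or.inl rfl, Or.inr ⟨r.symm h, blockCard_eq_of_rel h ▸ hk⟩]
  iseqv.trans := by
    rintro x y z (rfl | ⟨hxy, hk⟩) (rfl | ⟨hyz, hk'⟩)
    exacts [Or.inl rfl, Or.inr ⟨hyz, hk'⟩, Or.inr ⟨hxy, hk⟩, Or.inr ⟨r.trans hxy hyz, hk⟩]

lemma splitSmallBlocks_mono [Finite α] {r s : Setoid α} (h : r ≤ s) (k : ℕ) :
    r.splitSmallBlocks k ≤ s.splitSmallBlocks k := by
  rintro x y (rfl | ⟨hxy, hk⟩)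
  exacts [Or.inl rfl, Or.inr ⟨h hxy, hk.trans (blockCard_mono h x)⟩]

def singleBlock (S : Set α) : Setoid α where
  r x y := x = y ∨ x ∈ S ∧ y ∈ S
  iseqv.refl _ := Or.inl rfl
  iseqv.symm := by
    rintro x y (rfl | ⟨hx, hy⟩)
    exacts [Or.inl rfl, Or.inr ⟨hy, hx⟩]
  iseqv.trans := by
    rintro x y z (rfl | ⟨hx, hy⟩) (rfl | ⟨hy', hz⟩)
    exacts [Or.inl rfl, Or.inr ⟨hy', hz⟩, Or.inr ⟨hx, hy⟩, Or.inr ⟨hx, hz⟩]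

lemma singleBlock_le_of_subset {r : Setoid α} {S : Set α} {x : α} (h : S ⊆ {y | r x y}) :
    singleBlock S ≤ r := by
  rintro y z (rfl | ⟨hy, hz⟩)
  exacts [r.refl y, r.trans (r.symm (h hy)) (h hz)]

lemma blockCard_singleBlock_of_mem {S : Set α} {x : α} (hx : x ∈ S) :
    (singleBlock S).blockCard x = S.ncard := by
  rw [blockCard_eq_ncard]
  congr 1
  ext y
  exact ⟨fun h => h.elim (· ▸ hx) And.right, fun hy => Or.inr ⟨hx, hy⟩⟩

lemma blockCard_singleBlock_of_notMem {S : Set α} {x : α} (hx : x ∉ S) :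
    (singleBlock S).blockCard x = 1 :=
  blockCard_eq_one_iff.2 fun _ h => (h.resolve_right fun h => hx h.1).symm

variable (T : Setoid α)

def ofBlocks (s : ∀ c : Quotient T, Setoid {x // (⟦x⟧ : Quotient T) = c}) : Setoid α where
  r x y := ∃ (c : Quotient T) (x' y' : {z // (⟦z⟧ : Quotient T) = c}),
    x'.1 = x ∧ y'.1 = y ∧ s c x' y'
  iseqv.refl x := ⟨⟦x⟧, ⟨x, rfl⟩, ⟨x, rfl⟩, rfl, rfl, (s _).refl _⟩
  iseqv.symm := by
    rintro x y ⟨c, x', y', hx, hy, h⟩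
    exact ⟨c, y', x', hy, hx, (s c).symm h⟩
  iseqv.trans := by
    rintro x y z ⟨c, x', ⟨y₁, hy₁⟩, hx, rfl, h⟩ ⟨c', ⟨y₂, rfl⟩, z', rfl, hz, h'⟩
    subst hy₁
    exact ⟨_, x', z', hx, hz, (s _).trans h h'⟩

variable {T}

lemma comap_val_ofBlocks (s : ∀ c : Quotient T, Setoid {x // (⟦x⟧ : Quotient T) = c})
    (c : Quotient T) : (ofBlocks T s).comap Subtype.val = s c := by
  ext ⟨x, rfl⟩ ⟨y, hy⟩
  refine ⟨?_, fun h => ⟨_, _, _, rfl, rfl, h⟩⟩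
  rintro ⟨_, ⟨_, rfl⟩, ⟨_, _⟩, rfl, rfl, h⟩
  exact h

lemma ofBlocks_le {s : ∀ c : Quotient T, Setoid {x // (⟦x⟧ : Quotient T) = c}} :
    ofBlocks T s ≤ T := by
  rintro x y ⟨c, ⟨x, hx⟩, ⟨y, hy⟩, rfl, rfl, -⟩
  exact Quotient.exact (hx.trans hy.symm)

lemma ofBlocks_comap_val {r : Setoid α} (hr : r ≤ T) :
    ofBlocks T (fun _ => r.comap Subtype.val) = r := by
  ext x y
  refine ⟨?_, fun h => ⟨⟦x⟧, ⟨x, rfl⟩, ⟨y, (Quotient.sound (hr h)).symm⟩, rfl, rfl, h⟩⟩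
  rintro ⟨c, x', y', rfl, rfl, h⟩
  exact h

lemma ofBlocks_mono {s s' : ∀ c : Quotient T, Setoid {x // (⟦x⟧ : Quotient T) = c}}
    (h : ∀ c, s c ≤ s' c) : ofBlocks T s ≤ ofBlocks T s' := by
  rintro x y ⟨c, x', y', hx, hy, hs⟩
  exact ⟨c, x', y', hx, hy, h c hs⟩

lemma blockCard_comap_val {r : Setoid α} (hr : r ≤ T) {c : Quotient T}
    (x' : {z // (⟦z⟧ : Quotient T) = c}) :
    (r.comap Subtype.val).blockCard x' = r.blockCard x'.1 :=
  Nat.card_congr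
    { toFun y := ⟨y.1.1, y.2⟩
      invFun y := ⟨⟨y.1, (Quotient.sound (hr y.2)).symm.trans x'.2⟩, y.2⟩ }

lemma blockCard_ofBlocks (s : ∀ c : Quotient T, Setoid {x // (⟦x⟧ : Quotient T) = c}) (x : α) :
    (ofBlocks T s).blockCard x = (s ⟦x⟧).blockCard ⟨x, rfl⟩ := by
  rw [← comap_val_ofBlocks s, blockCard_comap_val ofBlocks_le]

end General

section KEquals

variable {α : Type} {k : ℕ}

lemma mem_kEqualsPartitions_iff {r : Setoid α} :
    r ∈ kEqualsPartitions α k ↔ r ≤ r.splitSmallBlocks k := by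
  refine ⟨fun hr x y hxy => ?_, fun hr x => ?_⟩
  · refine (hr x).imp (fun h => ?_) fun hk => ⟨hxy, hk⟩
    exact (blockCard_eq_one_iff.1 h y hxy).symm
  · by_cases hk : k ≤ r.blockCard x
    · exact Or.inr hk
    refine Or.inl (blockCard_eq_one_iff.2 fun y hxy => ?_)
    exact ((hr hxy).resolve_right fun h => hk h.2).symm

theorem sSup_mem_kEqualsPartitions [Finite α] {A : Set (Setoid α)}
    (hA : A ⊆ kEqualsPartitions α k) : sSup A ∈ kEqualsPartitions α k :=
  mem_kEqualsPartitions_iff.2 <| sSup_le fun _ ha =>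
    (mem_kEqualsPartitions_iff.1 (hA ha)).trans (splitSmallBlocks_mono (le_sSup ha) k)

lemma singleBlock_mem_kEqualsPartitions (S : Set α) :
    singleBlock S ∈ kEqualsPartitions α S.ncard := fun x => by
  by_cases hx : x ∈ S
  · exact Or.inr (blockCard_singleBlock_of_mem hx).ge
  · exact Or.inl (blockCard_singleBlock_of_notMem hx)

lemma exists_singleBlock_le_of_rel {r : Setoid α} (hk : 2 ≤ k)
    (hr : r ∈ kEqualsPartitions α k) {x y : α} (hxy : r x y) (hne : x ≠ y) :
    ∃ S : Set α, S.ncard = k ∧ x ∈ S ∧ y ∈ S ∧ singleBlock S ≤ r := by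
  have hkB : k ≤ {z | r x z}.ncard := by
    rw [← blockCard_eq_ncard]
    exact ((mem_kEqualsPartitions_iff.1 hr hxy).resolve_left hne).2
  obtain ⟨S, hxyS, hSB, hS⟩ := Set.exists_subsuperset_card_eq (s := {x, y})
    (Set.insert_subset_iff.2 ⟨r.refl x, Set.singleton_subset_iff.2 hxy⟩)
    ((Set.ncard_pair hne).trans_le hk) hkB
  exact ⟨S, hS, hxyS (Set.mem_insert x _), hxyS (Set.mem_insert_of_mem x rfl),
    singleBlock_le_of_subset hSB⟩

variable {T : Setoid α}

lemma comap_val_mem_kEqualsPartitions {r : Setoid α} (hr : r ∈ kEqualsPartitions α k)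
    (hle : r ≤ T) (c : Quotient T) :
    r.comap Subtype.val ∈ kEqualsPartitions {x // (⟦x⟧ : Quotient T) = c} k := fun x' => by
  have h := blockCard_comap_val hle x'
  unfold blockCard at h
  exact h ▸ hr x'.1

lemma ofBlocks_mem_kEqualsPartitions
    {s : ∀ c : Quotient T, Setoid {x // (⟦x⟧ : Quotient T) = c}}
    (hs : ∀ c, s c ∈ kEqualsPartitions {x // (⟦x⟧ : Quotient T) = c} k) :
    ofBlocks T s ∈ kEqualsPartitions α k := fun x => by
  have h := blockCard_ofBlocks s x
  unfold blockCard at h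
  exact h ▸ hs ⟦x⟧ ⟨x, rfl⟩

variable (k T)

def kEqualsIicOrderIso :
    {r : Setoid α // r ∈ kEqualsPartitions α k ∧ r ≤ T} ≃o
      ∀ c : Quotient T, {s : Setoid {x // (⟦x⟧ : Quotient T) = c} //
        s ∈ kEqualsPartitions {x // (⟦x⟧ : Quotient T) = c} k} :=
  Equiv.toOrderIso
    { toFun r c := ⟨r.1.comap Subtype.val, comap_val_mem_kEqualsPartitions r.2.1 r.2.2 c⟩
      invFun s := ⟨ofBlocks T fun c => (s c).1,
        ofBlocks_mem_kEqualsPartitions fun c => (s c).2, ofBlocks_le⟩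
      left_inv r := Subtype.ext (ofBlocks_comap_val r.2.2)
      right_inv _ := funext fun c => Subtype.ext (comap_val_ofBlocks _ c) }
    (fun _ _ h _ _ _ hxy => h hxy)
    (fun _ _ h => ofBlocks_mono h)

end KEquals

end Setoid

section Atoms

open Setoid

variable {n k : ℕ}

lemma singleBlock_mem_bigBlock (hk : 1 ≤ k) {S : Set (Fin n)} (hS : S.ncard = k) :
    singleBlock S ∈ bigBlock n k := by
  obtain ⟨x, hx⟩ := Set.nonempty_of_ncard_ne_zero (hS.trans_ne (by omega))
  exact ⟨x, (blockCard_singleBlock_of_mem hx).trans hS |>.ge⟩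

lemma exists_eq_singleBlock_of_isAtomOf (hk : 1 ≤ k) {a : Setoid (Fin n)}
    (ha : isAtomOf (bigBlock n k) a) : ∃ S : Set (Fin n), S.ncard = k ∧ a = singleBlock S := by
  obtain ⟨⟨x, hx⟩, hmin⟩ := ha
  obtain ⟨S, hSB, hS⟩ := Set.exists_subset_card_eq (s := {y | a x y})
    ((blockCard_eq_ncard a x).symm.trans_ge hx)
  exact ⟨S, hS, (hmin _ (singleBlock_mem_bigBlock hk hS) (singleBlock_le_of_subset hSB)).symm⟩

lemma isAtomOf_singleBlock (hk : 2 ≤ k) {S : Set (Fin n)} (hS : S.ncard = k) :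
    isAtomOf (bigBlock n k) (singleBlock S) := by
  refine ⟨singleBlock_mem_bigBlock (by omega) hS, fun b ⟨x, hx⟩ hle => le_antisymm hle ?_⟩
  have hxS : x ∈ S := by
    by_contra hxS
    have := blockCard_mono hle x
    rw [blockCard_singleBlock_of_notMem hxS] at this
    exact absurd (hx.trans this) (by omega)
  have hBS : {y | b x y} ⊆ S := fun y hy => (hle hy).elim (· ▸ hxS) And.right
  have hB : {y | b x y} = S :=
    Set.eq_of_subset_of_ncard_le hBS (hS.trans_le ((blockCard_eq_ncard b x) ▸ hx))
  exact singleBlock_le_of_subset hB.ge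

theorem joinClosure_bigBlock (hk : 2 ≤ k) :
    joinClosure (bigBlock n k) = kEqualsPartitions (Fin n) k := by
  ext r
  constructor
  · rintro ⟨A, hA, rfl⟩
    refine sSup_mem_kEqualsPartitions fun a ha => ?_
    obtain ⟨S, rfl, rfl⟩ := exists_eq_singleBlock_of_isAtomOf (by omega) (hA a ha)
    exact singleBlock_mem_kEqualsPartitions S
  · intro hr
    refine ⟨{a | isAtomOf (bigBlock n k) a ∧ a ≤ r}, fun a ha => ha.1,
      le_antisymm (fun x y hxy => ?_) (sSup_le fun a ha => ha.2)⟩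
    obtain rfl | hne := eq_or_ne x y
    · exact Setoid.refl' _ x
    obtain ⟨S, hS, hx, hy, hle⟩ := exists_singleBlock_le_of_rel hk hr hxy hne
    exact le_sSup (s := {a | isAtomOf (bigBlock n k) a ∧ a ≤ r})
      ⟨isAtomOf_singleBlock hk hS, hle⟩ (Or.inr ⟨hx, hy⟩)

end Atoms

theorem kEquals_join_closure_general (n k : ℕ) (hk2 : 2 ≤ k) :
    joinClosure (bigBlock n k) = kEqualsPartitions (Fin n) k ∧
    ∀ T : Setoid (Fin n), T ∈ joinClosure (bigBlock n k) →
      Nonempty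
        (({r : Setoid (Fin n) // r ∈ joinClosure (bigBlock n k) ∧ r ≤ T}) ≃o
          (∀ c : Quotient T,
            {s : Setoid {x : Fin n // (⟦x⟧ : Quotient T) = c} //
              s ∈ kEqualsPartitions {x : Fin n // (⟦x⟧ : Quotient T) = c} k})) := by
  have hJ := joinClosure_bigBlock (n := n) hk2
  refine ⟨hJ, fun T _ => ?_⟩
  rw [hJ]
  exact ⟨Setoid.kEqualsIicOrderIso k T⟩

/-- Let `U ⊆ Π_n` be the upwards closed set of partitions of `{1,...,n}` with at
least one block of size `≥ k` (`2 ≤ k ≤ n`), and let `J_{U₀}` be the set of joins of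
atoms of `U` together with the bottom element. Then `J_{U₀}` equals the subposet
`Π_{(k,1^{n-k})}` of partitions all of whose blocks are singletons or of size `≥ k`;
moreover, for `T ∈ J_{U₀}`, the lower interval `J_{U₀}^{≤ T}` is isomorphic as a
poset to the product, over the blocks `c` of `T` (of sizes `t_i`), of the posets
`Π_{(k,1^{t_i-k})}` of such partitions of the blocks. -/
theorem kEquals_join_closure (n k : ℕ) (hk2 : 2 ≤ k) (hkn : k ≤ n) :
    joinClosure (bigBlock n k) = kEqualsPartitions (Fin n) k ∧
    ∀ T : Setoid (Fin n), T ∈ joinClosure (bigBlock n k) →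
      Nonempty
        (({r : Setoid (Fin n) // r ∈ joinClosure (bigBlock n k) ∧ r ≤ T}) ≃o
          (∀ c : Quotient T,
            {s : Setoid {x : Fin n // (⟦x⟧ : Quotient T) = c} //
              s ∈ kEqualsPartitions {x : Fin n // (⟦x⟧ : Quotient T) = c} k})) :=
  kEquals_join_closure_general n k hk2
end
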